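/- arXiv:1611.03944 — 6 statements merged into one kernel-verified Lean document; each statement's English description precedes it below -/
import Mathlib

section
/- Let (i_1,…,i_{k+1}) be any (k+1)-tuple of elements of J. Then for every z ∈ ℂ^n and every t ∈ ℂ^k such that f_{i_j}(t,z) ≠ 0 for all j = 1,…,k+1, one has f_{i_1,…,i_{k+1}}(z) · ∏_{j=1}^{k+1} ( a_{i_j} / f_{i_j}(t,z) ) = Σ_{j=1}^{k+1} (−1)^{j+1} a_{i_j} d_{i_1,…,î_j,…,i_{k+1}} · ∏_{m=1, m≠j}^{k+1} ( a_{i_m} / f_{i_m}(t,z) ). -/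
open scoped BigOperators

noncomputable section

namespace Stmt1

variable {n k : ℕ}

/-- `f_j(t,z) = g_j(t) + z_j` where `g_j(t) = ∑ i, b_j^i t_i`. -/
def fval (b : Fin n → Fin k → ℂ) (z : Fin n → ℂ) (t : Fin k → ℂ) (j : Fin n) : ℂ :=
  (∑ r : Fin k, b j r * t r) + z j

/-- `d_{i_1,…,i_k}`: determinant of the matrix whose `ℓ`-th column is `b (T ℓ)`. -/
def dtup (b : Fin n → Fin k → ℂ) (T : Fin k → Fin n) : ℂ :=
  Matrix.det (Matrix.of fun (r l : Fin k) => b (T l) r)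

/-- `f_{i_1,…,i_{k+1}}(z) = ∑_j (−1)^{j+1} z_{i_j} d_{i_1,…,î_j,…,i_{k+1}}`
(zero-based signs). -/
def fI (b : Fin n → Fin k → ℂ) (i : Fin (k + 1) → Fin n) (z : Fin n → ℂ) : ℂ :=
  ∑ j : Fin (k + 1), (-1 : ℂ) ^ (j : ℕ) * z (i j) * dtup b (fun l => i (j.succAbove l))

end Stmt1

/-! The `k × (k+1)` matrix `B` with columns `b_{i_1}, …, b_{i_{k+1}}` has the signed maximal
minors `(-1)^j d_{…î_j…}` as a kernel vector: pairing them with any row of `B` is the Laplace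
expansion of a determinant with a repeated row. Hence `f_I(z)` is unchanged when each `z_{i_j}` is
replaced by `f_{i_j}(t,z) = g_{i_j}(t) + z_{i_j}`, and multiplying by `∏ a_{i_m}/f_{i_m}` cancels
the `j`-th factor of the product in the `j`-th term. -/

open Matrix

section Minors

variable {R : Type*} [CommRing R] {k : ℕ}

theorem Matrix.sum_alternating_mul_det_submatrix_succAbove_eq_zero
    (B : Matrix (Fin k) (Fin (k + 1)) R) (r : Fin k) :
    ∑ j : Fin (k + 1), (-1 : R) ^ (j : ℕ) * B r j * (B.submatrix id j.succAbove).det = 0 := by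
  have hdet : det (of (vecCons (B r) B) : Matrix (Fin (k + 1)) (Fin (k + 1)) R) = 0 :=
    det_zero_of_row_eq (Fin.succ_ne_zero r).symm rfl
  rwa [det_succ_row_zero] at hdet

theorem Matrix.sum_alternating_vecMul_mul_det_submatrix_succAbove_eq_zero
    (B : Matrix (Fin k) (Fin (k + 1)) R) (t : Fin k → R) :
    ∑ j : Fin (k + 1), (-1 : R) ^ (j : ℕ) * (t ᵥ* B) j * (B.submatrix id j.succAbove).det
      = 0 := by
  simp_rw [vecMul, dotProduct, Finset.mul_sum, Finset.sum_mul]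
  rw [Finset.sum_comm]
  refine Finset.sum_eq_zero fun r _ => ?_
  rw [← mul_zero (t r), ← B.sum_alternating_mul_det_submatrix_succAbove_eq_zero r,
    Finset.mul_sum]
  exact Finset.sum_congr rfl fun j _ => by ring

end Minors

theorem Finset.mul_prod_div_eq_mul_prod_erase {ι K : Type*} [DecidableEq ι] [Field K]
    {s : Finset ι} {j : ι} (hj : j ∈ s) (a f : ι → K) (hf : f j ≠ 0) :
    f j * ∏ m ∈ s, a m / f m = a j * ∏ m ∈ s.erase j, a m / f m := by
  rw [← Finset.mul_prod_erase s _ hj, ← mul_assoc, mul_div_cancel₀ _ hf]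

namespace Stmt1

variable {n k : ℕ}

theorem fI_eq_sum_fval (b : Fin n → Fin k → ℂ) (i : Fin (k + 1) → Fin n) (z : Fin n → ℂ)
    (t : Fin k → ℂ) :
    fI b i z = ∑ j : Fin (k + 1),
      (-1 : ℂ) ^ (j : ℕ) * fval b z t (i j) * dtup b (fun l => i (j.succAbove l)) := by
  set B : Matrix (Fin k) (Fin (k + 1)) ℂ := of fun r j => b (i j) r
  have hkernel : ∑ j : Fin (k + 1),
      (-1 : ℂ) ^ (j : ℕ) * (t ᵥ* B) j * dtup b (fun l => i (j.succAbove l)) = 0 :=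
    B.sum_alternating_vecMul_mul_det_submatrix_succAbove_eq_zero t
  have hfval (j : Fin (k + 1)) : fval b z t (i j) = (t ᵥ* B) j + z (i j) := by
    simp only [fval, vecMul, dotProduct, B, of_apply, mul_comm]
  simp only [fI, hfval, mul_add, add_mul, Finset.sum_add_distrib, hkernel, zero_add]

theorem stmt1_general (n k : ℕ)
    (b : Fin n → Fin k → ℂ)
    (a : Fin n → ℂ)
    (i : Fin (k + 1) → Fin n) (z : Fin n → ℂ) (t : Fin k → ℂ)
    (hf : ∀ j : Fin (k + 1), fval b z t (i j) ≠ 0) :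
    fI b i z * ∏ j : Fin (k + 1), a (i j) / fval b z t (i j)
      = ∑ j : Fin (k + 1),
          (-1 : ℂ) ^ (j : ℕ) * a (i j) * dtup b (fun l => i (j.succAbove l)) *
            ∏ m ∈ Finset.univ.erase j, a (i m) / fval b z t (i m) := by
  rw [fI_eq_sum_fval b i z t, Finset.sum_mul]
  refine Finset.sum_congr rfl fun j _ => ?_
  have hcancel := Finset.mul_prod_div_eq_mul_prod_erase (Finset.mem_univ j)
    (fun m => a (i m)) (fun m => fval b z t (i m)) (hf j)
  calc (-1 : ℂ) ^ (j : ℕ) * fval b z t (i j) * dtup b (fun l => i (j.succAbove l)) *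
        ∏ m, a (i m) / fval b z t (i m)
      = (-1 : ℂ) ^ (j : ℕ) * dtup b (fun l => i (j.succAbove l)) *
          (fval b z t (i j) * ∏ m, a (i m) / fval b z t (i m)) := by ring
    _ = _ := by rw [hcancel]; ring

/-- **Lemma 3.6 of the paper.** For any `(k+1)`-tuple `(i_1,…,i_{k+1})` of hyperplane
indices and any `(z,t)` where all `f_{i_j}` are nonzero,
`f_I(z) ∏_j a_{i_j}/f_{i_j} = ∑_j (−1)^{j+1} a_{i_j} d_{…î_j…} ∏_{m≠j} a_{i_m}/f_{i_m}`. -/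
theorem stmt1 (n k : ℕ) (hk : 0 < k) (hkn : k < n)
    (b : Fin n → Fin k → ℂ) (hb0 : ∀ j, b j ≠ 0)
    (hbspan : Submodule.span ℂ (Set.range b) = ⊤)
    (a : Fin n → ℂ) (ha : ∀ j, a j ≠ 0)
    (i : Fin (k + 1) → Fin n) (z : Fin n → ℂ) (t : Fin k → ℂ)
    (hf : ∀ j : Fin (k + 1), fval b z t (i j) ≠ 0) :
    fI b i z * ∏ j : Fin (k + 1), a (i j) / fval b z t (i j)
      = ∑ j : Fin (k + 1),
          (-1 : ℂ) ^ (j : ℕ) * a (i j) * dtup b (fun l => i (j.succAbove l)) *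
            ∏ m ∈ Finset.univ.erase j, a (i m) / fval b z t (i m) :=
  stmt1_general n k b a i z t hf

end Stmt1
end
end

section
/- Suppose i_1,…,i_{k+1} ∈ J are pairwise distinct and the set {i_1,…,i_{k+1}} contains an independent k-element subset. Then in the algebra O(C) one has f_{i_1,…,i_{k+1}}(x) · p_{i_1} p_{i_2} ⋯ p_{i_{k+1}} = Σ_{j=1}^{k+1} (−1)^{j+1} a_{i_j} · w_{i_1,…,î_j,…,i_{k+1}}, where the hat denotes omission. -/
/-!
Laplace expansion of a `(k+1) × (k+1)` determinant with a repeated row gives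
`∑_j (-1)^j d_{i_1,…,î_j,…,i_{k+1}} b_{i_j} = 0`, so the combination
`∑_j (-1)^j d_{i_1,…,î_j,…,i_{k+1}} f_{i_j}(t,x)` has no linear part and equals the constant
`f_{i_1,…,i_{k+1}}(x)`. Multiplying by `p_{i_1} ⋯ p_{i_{k+1}}` and using `p_j f_j = a_j` gives the
identity, which therefore already holds in `O(U)`.
-/

open scoped BigOperators

noncomputable section

namespace Stmt2

variable {n k : ℕ}

/-- The polynomial `f_j(t,x) = ∑ i, b_j^i t_i + x_j` in `ℂ[t_1,…,t_k]`. -/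
def fpoly (b : Fin n → Fin k → ℂ) (x : Fin n → ℂ) (j : Fin n) : MvPolynomial (Fin k) ℂ :=
  (∑ i : Fin k, MvPolynomial.C (b j i) * MvPolynomial.X i) + MvPolynomial.C (x j)

/-- The multiplicative set generated by the `f_j(t,x)`. -/
def fSub (b : Fin n → Fin k → ℂ) (x : Fin n → ℂ) : Submonoid (MvPolynomial (Fin k) ℂ) :=
  Submonoid.closure (Set.range (fpoly b x))

/-- `O(U)`: the localization of `ℂ[t]` at the multiplicative set generated by the `f_j`. -/
abbrev OU (b : Fin n → Fin k → ℂ) (x : Fin n → ℂ) := Localization (fSub b x)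

lemma fpoly_mem (b : Fin n → Fin k → ℂ) (x : Fin n → ℂ) (j : Fin n) :
    fpoly b x j ∈ fSub b x :=
  Submonoid.subset_closure ⟨j, rfl⟩

/-- The element `a_j/f_j ∈ O(U)`. -/
def pU (b : Fin n → Fin k → ℂ) (x : Fin n → ℂ) (a : Fin n → ℂ) (j : Fin n) : OU b x :=
  Localization.mk (MvPolynomial.C (a j)) ⟨fpoly b x j, fpoly_mem b x j⟩

/-- The generator `∂Φ/∂t_i = ∑_j a_j b_j^i / f_j ∈ O(U)`. -/
def genI (b : Fin n → Fin k → ℂ) (x : Fin n → ℂ) (a : Fin n → ℂ) (i : Fin k) : OU b x :=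
  ∑ j : Fin n,
    Localization.mk (MvPolynomial.C (a j * b j i)) ⟨fpoly b x j, fpoly_mem b x j⟩

/-- The ideal `I_x = ⟨∂Φ/∂t_1, …, ∂Φ/∂t_k⟩ ⊆ O(U)`. -/
def Icrit (b : Fin n → Fin k → ℂ) (x : Fin n → ℂ) (a : Fin n → ℂ) : Ideal (OU b x) :=
  Ideal.span (Set.range (genI b x a))

/-- `O(C) = O(U)/I_x`, the algebra of functions on the critical set. -/
abbrev OC (b : Fin n → Fin k → ℂ) (x : Fin n → ℂ) (a : Fin n → ℂ) :=
  OU b x ⧸ Icrit b x a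

/-- `p_j = [a_j/f_j] ∈ O(C)`. -/
def pC (b : Fin n → Fin k → ℂ) (x : Fin n → ℂ) (a : Fin n → ℂ) (j : Fin n) : OC b x a :=
  Ideal.Quotient.mk _ (pU b x a j)

/-- The image of a constant `d ∈ ℂ` in `O(C)`. -/
def cst (b : Fin n → Fin k → ℂ) (x : Fin n → ℂ) (a : Fin n → ℂ) (d : ℂ) : OC b x a :=
  Ideal.Quotient.mk _ (algebraMap (MvPolynomial (Fin k) ℂ) (OU b x) (MvPolynomial.C d))

/-- `d_{i_1,…,i_k}`: determinant of the matrix whose `ℓ`-th column is `b (T ℓ)`. -/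
def dtup (b : Fin n → Fin k → ℂ) (T : Fin k → Fin n) : ℂ :=
  Matrix.det (Matrix.of fun (r l : Fin k) => b (T l) r)

/-- `f_{i_1,…,i_{k+1}}(z) = ∑_j (−1)^{j+1} z_{i_j} d_{i_1,…,î_j,…,i_{k+1}}`
(zero-based signs). -/
def fI (b : Fin n → Fin k → ℂ) (i : Fin (k + 1) → Fin n) (z : Fin n → ℂ) : ℂ :=
  ∑ j : Fin (k + 1), (-1 : ℂ) ^ (j : ℕ) * z (i j) * dtup b (fun l => i (j.succAbove l))

theorem sum_neg_one_pow_mul_det_succAbove_mul_eq_zero {R : Type*} [CommRing R]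
    (v : Fin (k + 1) → Fin k → R) (r : Fin k) :
    ∑ j : Fin (k + 1),
      (-1 : R) ^ (j : ℕ) * Matrix.det (Matrix.of fun (s l : Fin k) => v (j.succAbove l) s) *
        v j r = 0 := by
  -- first-row Laplace expansion of a determinant whose row `0` repeats row `r + 1`
  set M : Matrix (Fin (k + 1)) (Fin (k + 1)) R :=
    Matrix.of fun p q => v q (Fin.cases r id p)
  have hM : M.det = 0 :=
    Matrix.det_zero_of_row_eq (Fin.succ_ne_zero r).symm (funext fun _ => rfl)
  rw [Matrix.det_succ_row_zero] at hM
  rw [← hM]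
  exact Finset.sum_congr rfl fun j _ => by rw [mul_right_comm]; rfl

theorem sum_C_mul_fpoly_of_sum_mul_eq_zero {ι : Type*} [Fintype ι] (b : Fin n → Fin k → ℂ)
    (x : Fin n → ℂ) (i : ι → Fin n) (c : ι → ℂ) (hc : ∀ r, ∑ j, c j * b (i j) r = 0) :
    ∑ j, MvPolynomial.C (c j) * fpoly b x (i j) = MvPolynomial.C (∑ j, c j * x (i j)) := by
  have hlin : ∀ r, ∑ j, MvPolynomial.C (c j * b (i j) r) * MvPolynomial.X r
      = (0 : MvPolynomial (Fin k) ℂ) := fun r => by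
    rw [← Finset.sum_mul, ← map_sum, hc, map_zero, zero_mul]
  simp only [fpoly, mul_add, Finset.mul_sum, ← mul_assoc, ← map_mul]
  rw [Finset.sum_add_distrib, Finset.sum_comm, Finset.sum_congr rfl fun r _ => hlin r,
    Finset.sum_const_zero, zero_add, map_sum]

theorem sum_C_mul_fpoly_eq_C_fI (b : Fin n → Fin k → ℂ) (x : Fin n → ℂ)
    (i : Fin (k + 1) → Fin n) :
    ∑ j : Fin (k + 1),
        MvPolynomial.C ((-1 : ℂ) ^ (j : ℕ) * dtup b (fun l => i (j.succAbove l))) *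
          fpoly b x (i j)
      = MvPolynomial.C (fI b i x) := by
  refine (sum_C_mul_fpoly_of_sum_mul_eq_zero b x i _
    (sum_neg_one_pow_mul_det_succAbove_mul_eq_zero fun j => b (i j))).trans ?_
  exact congrArg _ (Finset.sum_congr rfl fun j _ => mul_right_comm _ _ _)

theorem sum_mul_prod_eq_sum_mul_prod_erase {ι R : Type*} [CommSemiring R] [DecidableEq ι]
    (s : Finset ι) (c f p q : ι → R) (hpf : ∀ j ∈ s, p j * f j = q j) :
    (∑ j ∈ s, c j * f j) * ∏ j ∈ s, p j = ∑ j ∈ s, c j * q j * ∏ m ∈ s.erase j, p m := by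
  calc (∑ j ∈ s, c j * f j) * ∏ j ∈ s, p j
      = ∑ j ∈ s, c j * (p j * f j) * ∏ m ∈ s.erase j, p m := by
        rw [Finset.sum_mul]
        refine Finset.sum_congr rfl fun j hj => ?_
        rw [← Finset.mul_prod_erase s p hj]
        ring
    _ = ∑ j ∈ s, c j * q j * ∏ m ∈ s.erase j, p m :=
        Finset.sum_congr rfl fun j hj => by rw [hpf j hj]

def toOC (b : Fin n → Fin k → ℂ) (x : Fin n → ℂ) (a : Fin n → ℂ) :
    MvPolynomial (Fin k) ℂ →+* OC b x a :=
  (Ideal.Quotient.mk _).comp (algebraMap (MvPolynomial (Fin k) ℂ) (OU b x))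

theorem cst_eq_toOC (b : Fin n → Fin k → ℂ) (x : Fin n → ℂ) (a : Fin n → ℂ) (d : ℂ) :
    cst b x a d = toOC b x a (MvPolynomial.C d) :=
  rfl

theorem pU_mul_algebraMap_fpoly (b : Fin n → Fin k → ℂ) (x : Fin n → ℂ) (a : Fin n → ℂ)
    (j : Fin n) :
    pU b x a j * algebraMap (MvPolynomial (Fin k) ℂ) (OU b x) (fpoly b x j)
      = algebraMap (MvPolynomial (Fin k) ℂ) (OU b x) (MvPolynomial.C (a j)) := by
  rw [pU, ← Localization.mk_one_eq_algebraMap, ← Localization.mk_one_eq_algebraMap,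
    Localization.mk_mul, mul_one, Localization.mk_eq_mk_iff, Localization.r_iff_exists]
  exact ⟨1, by simp [mul_comm]⟩

theorem pC_mul_toOC_fpoly (b : Fin n → Fin k → ℂ) (x : Fin n → ℂ) (a : Fin n → ℂ) (j : Fin n) :
    pC b x a j * toOC b x a (fpoly b x j) = cst b x a (a j) := by
  rw [pC, toOC, RingHom.comp_apply, ← map_mul, pU_mul_algebraMap_fpoly]
  rfl

theorem stmt2_general (n k : ℕ)
    (b : Fin n → Fin k → ℂ)
    (a : Fin n → ℂ)
    (x : Fin n → ℂ)
    (i : Fin (k + 1) → Fin n) :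
    cst b x a (fI b i x) * ∏ j : Fin (k + 1), pC b x a (i j)
      = ∑ j : Fin (k + 1),
          cst b x a ((-1 : ℂ) ^ (j : ℕ) * a (i j) * dtup b (fun l => i (j.succAbove l))) *
            ∏ m ∈ Finset.univ.erase j, pC b x a (i m) := by
  classical
  have hfI : cst b x a (fI b i x) = ∑ j : Fin (k + 1),
      cst b x a ((-1 : ℂ) ^ (j : ℕ) * dtup b (fun l => i (j.succAbove l))) *
        toOC b x a (fpoly b x (i j)) := by
    simp only [cst_eq_toOC, ← sum_C_mul_fpoly_eq_C_fI b x i, map_sum, map_mul]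
  rw [hfI, sum_mul_prod_eq_sum_mul_prod_erase Finset.univ _ (fun j => toOC b x a (fpoly b x (i j)))
    (fun j => pC b x a (i j)) _ fun j _ => pC_mul_toOC_fpoly b x a (i j)]
  refine Finset.sum_congr rfl fun j _ => ?_
  simp only [cst_eq_toOC, ← map_mul, mul_right_comm]

/-- **Corollary 3.7 of the paper.** If `i_1,…,i_{k+1} ∈ J` are pairwise distinct and
contain an independent `k`-element subset, then in `O(C)`
`f_{i_1,…,i_{k+1}}(x) p_{i_1} ⋯ p_{i_{k+1}} = ∑_j (−1)^{j+1} a_{i_j} w_{i_1,…,î_j,…,i_{k+1}}`,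
where `w_{l_1,…,l_k} = d_{l_1,…,l_k} p_{l_1} ⋯ p_{l_k}`. -/
theorem stmt2 (n k : ℕ) (hk : 0 < k) (hkn : k < n)
    (b : Fin n → Fin k → ℂ) (hb0 : ∀ j, b j ≠ 0)
    (hbspan : Submodule.span ℂ (Set.range b) = ⊤)
    (a : Fin n → ℂ) (ha : ∀ j, a j ≠ 0)
    (x : Fin n → ℂ)
    (i : Fin (k + 1) → Fin n) (hinj : Function.Injective i)
    (hind : ∃ j : Fin (k + 1),
      LinearIndependent ℂ (fun l : Fin k => b (i (j.succAbove l)))) :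
    cst b x a (fI b i x) * ∏ j : Fin (k + 1), pC b x a (i j)
      = ∑ j : Fin (k + 1),
          cst b x a ((-1 : ℂ) ^ (j : ℕ) * a (i j) * dtup b (fun l => i (j.succAbove l))) *
            ∏ m ∈ Finset.univ.erase j, pC b x a (i m) :=
  stmt2_general n k b a x i

end Stmt2
end
end

section
/- For every (k−1)-tuple (i_1,…,i_{k−1}) of elements of J one has Σ_{j∈J} d_{j,i_1,…,i_{k−1}} · p_j = 0 in the algebra O(C). -/
/-!
Laplace expansion along the first column writes `d_{j,i_1,…,i_{k-1}} = ∑_r b_j^r c_r` with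
cofactors `c_r` that do not depend on `j`. Hence
`∑_j d_{j,i_1,…,i_{k-1}} p_j = ∑_r c_r ∑_j b_j^r p_j = ∑_r c_r ∂Φ/∂t_r`,
which vanishes in `O(C)`.
-/

open scoped BigOperators

noncomputable section

namespace Stmt3

variable {n k : ℕ}

/-- The polynomial `f_j(t,x) = ∑ i, b_j^i t_i + x_j` in `ℂ[t_1,…,t_k]`. -/
def fpoly (b : Fin n → Fin k → ℂ) (x : Fin n → ℂ) (j : Fin n) : MvPolynomial (Fin k) ℂ :=
  (∑ i : Fin k, MvPolynomial.C (b j i) * MvPolynomial.X i) + MvPolynomial.C (x j)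

/-- The multiplicative set generated by the `f_j(t,x)`. -/
def fSub (b : Fin n → Fin k → ℂ) (x : Fin n → ℂ) : Submonoid (MvPolynomial (Fin k) ℂ) :=
  Submonoid.closure (Set.range (fpoly b x))

/-- `O(U)`: the localization of `ℂ[t]` at the multiplicative set generated by the `f_j`. -/
abbrev OU (b : Fin n → Fin k → ℂ) (x : Fin n → ℂ) := Localization (fSub b x)

lemma fpoly_mem (b : Fin n → Fin k → ℂ) (x : Fin n → ℂ) (j : Fin n) :
    fpoly b x j ∈ fSub b x :=
  Submonoid.subset_closure ⟨j, rfl⟩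

/-- The element `a_j/f_j ∈ O(U)`. -/
def pU (b : Fin n → Fin k → ℂ) (x : Fin n → ℂ) (a : Fin n → ℂ) (j : Fin n) : OU b x :=
  Localization.mk (MvPolynomial.C (a j)) ⟨fpoly b x j, fpoly_mem b x j⟩

/-- The generator `∂Φ/∂t_i = ∑_j a_j b_j^i / f_j ∈ O(U)`. -/
def genI (b : Fin n → Fin k → ℂ) (x : Fin n → ℂ) (a : Fin n → ℂ) (i : Fin k) : OU b x :=
  ∑ j : Fin n,
    Localization.mk (MvPolynomial.C (a j * b j i)) ⟨fpoly b x j, fpoly_mem b x j⟩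

/-- The ideal `I_x = ⟨∂Φ/∂t_1, …, ∂Φ/∂t_k⟩ ⊆ O(U)`. -/
def Icrit (b : Fin n → Fin k → ℂ) (x : Fin n → ℂ) (a : Fin n → ℂ) : Ideal (OU b x) :=
  Ideal.span (Set.range (genI b x a))

/-- `O(C) = O(U)/I_x`, the algebra of functions on the critical set. -/
abbrev OC (b : Fin n → Fin k → ℂ) (x : Fin n → ℂ) (a : Fin n → ℂ) :=
  OU b x ⧸ Icrit b x a

/-- `p_j = [a_j/f_j] ∈ O(C)`. -/
def pC (b : Fin n → Fin k → ℂ) (x : Fin n → ℂ) (a : Fin n → ℂ) (j : Fin n) : OC b x a :=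
  Ideal.Quotient.mk _ (pU b x a j)

/-- The image of a constant `d ∈ ℂ` in `O(C)`. -/
def cst (b : Fin n → Fin k → ℂ) (x : Fin n → ℂ) (a : Fin n → ℂ) (d : ℂ) : OC b x a :=
  Ideal.Quotient.mk _ (algebraMap (MvPolynomial (Fin k) ℂ) (OU b x) (MvPolynomial.C d))

/-- `d_{i_1,…,i_k}`: determinant of the matrix whose `ℓ`-th column is `b (T ℓ)`. -/
def dtup (b : Fin n → Fin k → ℂ) (T : Fin k → Fin n) : ℂ :=
  Matrix.det (Matrix.of fun (r l : Fin k) => b (T l) r)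

/-- The `k`-tuple `(j, i_1, …, i_{k−1})`. -/
def consT (hk : 0 < k) (j : Fin n) (iT : Fin (k - 1) → Fin n) : Fin k → Fin n :=
  fun l => if hl : (l : ℕ) = 0 then j
    else iT ⟨(l : ℕ) - 1, by have := l.isLt; omega⟩

section CriticalEquations

variable (b : Fin n → Fin k → ℂ) (x : Fin n → ℂ) (a : Fin n → ℂ)

theorem genI_eq_sum_smul_pU (i : Fin k) : genI b x a i = ∑ j, b j i • pU b x a j := by
  refine Finset.sum_congr rfl fun j _ => ?_
  rw [pU, Localization.smul_mk, MvPolynomial.smul_eq_C_mul, ← map_mul, mul_comm]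

theorem sum_smul_pC_eq_zero (i : Fin k) : ∑ j, b j i • pC b x a j = 0 := by
  have hgen : Ideal.Quotient.mkₐ ℂ (Icrit b x a) (genI b x a i) = 0 :=
    Ideal.Quotient.eq_zero_iff_mem.mpr (Ideal.subset_span ⟨i, rfl⟩)
  rw [genI_eq_sum_smul_pU, map_sum] at hgen
  simp only [map_smul] at hgen
  exact hgen

theorem cst_mul_pC (d : ℂ) (j : Fin n) : cst b x a d * pC b x a j = d • pC b x a j := by
  rw [cst, pC, ← map_mul, ← MvPolynomial.algebraMap_eq, ← IsScalarTower.algebraMap_apply,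
    ← Algebra.smul_def]
  rfl

end CriticalEquations

theorem consT_eq_cons {m : ℕ} (hk : 0 < m + 1) (j : Fin n) (iT : Fin m → Fin n) :
    consT hk j iT = (Fin.cons j iT : Fin (m + 1) → Fin n) := by
  ext l
  cases l using Fin.cases <;> simp [consT]

theorem exists_dtup_consT_eq_sum_mul (b : Fin n → Fin k → ℂ) (hk : 0 < k)
    (iT : Fin (k - 1) → Fin n) :
    ∃ c : Fin k → ℂ, ∀ j, dtup b (consT hk j iT) = ∑ r, b j r * c r := by
  obtain ⟨m, rfl⟩ : ∃ m, k = m + 1 := ⟨k - 1, by omega⟩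
  refine ⟨fun r => (-1) ^ (r : ℕ) * (Matrix.of fun r' l => b (iT l) (r.succAbove r')).det,
    fun j => ?_⟩
  rw [dtup, consT_eq_cons, Matrix.det_succ_column_zero]
  refine Finset.sum_congr rfl fun r _ => ?_
  simp only [Matrix.of_apply, Fin.cons_zero, Matrix.submatrix, Fin.cons_succ]
  -- the two determinants differ only in the index type `Fin (m + 1 - 1)` vs `Fin m`
  rw [mul_left_comm (b j r), ← mul_assoc]
  rfl

theorem stmt3_general (n k : ℕ) (hk : 0 < k) (b : Fin n → Fin k → ℂ) (a : Fin n → ℂ) (x : Fin n → ℂ)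
    (iT : Fin (k - 1) → Fin n) :
    ∑ j : Fin n, cst b x a (dtup b (consT hk j iT)) * pC b x a j = 0 := by
  obtain ⟨c, hc⟩ := exists_dtup_consT_eq_sum_mul b hk iT
  calc ∑ j, cst b x a (dtup b (consT hk j iT)) * pC b x a j
      = ∑ j, (∑ r, b j r * c r) • pC b x a j := by simp only [cst_mul_pC, hc]
    _ = ∑ r, c r • ∑ j, b j r • pC b x a j := by
        simp only [Finset.sum_smul, Finset.smul_sum, mul_comm (b _ _), mul_smul]
        exact Finset.sum_comm
    _ = 0 := by simp only [sum_smul_pC_eq_zero, smul_zero, Finset.sum_const_zero]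

/-- **Relation (3.5) of the paper.** For every `(k−1)`-tuple `(i_1,…,i_{k−1})` of
elements of `J`, `∑_{j∈J} d_{j,i_1,…,i_{k−1}} p_j = 0` in `O(C)`. -/
theorem stmt3 (n k : ℕ) (hk : 0 < k) (hkn : k < n)
    (b : Fin n → Fin k → ℂ) (hb0 : ∀ j, b j ≠ 0)
    (hbspan : Submodule.span ℂ (Set.range b) = ⊤)
    (a : Fin n → ℂ) (ha : ∀ j, a j ≠ 0)
    (x : Fin n → ℂ)
    (iT : Fin (k - 1) → Fin n) :
    ∑ j : Fin n, cst b x a (dtup b (consT hk j iT)) * pC b x a j = 0 :=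
  stmt3_general n k hk b a x iT

end Stmt3
end
end

section
/- Let (J_1,…,J_m) be an elementary subarrangement of type λ with J_λ = J_1 ∪ ⋯ ∪ J_m, and let I and L be distinguished elements of (J_1,…,J_m). For each h let u_h (respectively s_h) be the position, in the increasing ordering of J_h, of the unique element of J_h ∖ I (respectively of J_h ∖ L). Let T_I (respectively T_L) be the ordered k-tuple obtained by concatenating the increasing lists of I ∩ J_1, …, I ∩ J_m (respectively of L ∩ J_1, …, L ∩ J_m). Then S_a( s_{T_I}(J_1,…,J_m), e_{T_L} ) = ( ∏_{h=1}^m (−1)^{u_h + s_h} ) · ∏_{j∈J_λ} a_j. -/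
/-!
Expand `σ_1 ∧ ⋯ ∧ σ_m` by multilinearity, one term for each choice `w` of an omitted element
`j_{w_h}^h` in every block. At a distinguished `M` only the term omitting exactly `J_h ∖ M`
survives, so the `M`-coordinate of `s(J_1,…,J_m)` is `∏_h (−1)^{w_h} a_{j_{w_h}^h}` times
`e_{T_M}(M) = ±1`. The normalisation at `T_I` therefore forces `ε = ∏_h (−1)^{u_h}`.
The set `L` is independent: by the rank condition (ii) each `b_j`, `j ∈ J_h`, lies in the span
of the other vectors of `J_1 ∪ ⋯ ∪ J_h`, so `L` spans `X_m^*`, which has dimension `k = |L|`.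
Hence `S_a(·, e_{T_L})` only sees the `L`-coordinate, with weight `∏_{j∈L} a_j`, and
`∏_{j∈L} a_j · ∏_h a_{j_{s_h}^h} = ∏_{j∈J_λ} a_j`.
-/

open scoped BigOperators
open Classical

noncomputable section

namespace ArrPaper

variable {n k : ℕ}

/-! ## The model of `V = ⋀^k ℂ^J` -/

/-- The `k`-element subsets of `J = {1,…,n}`. -/
abbrev KSub (n k : ℕ) := {s : Finset (Fin n) // s.card = k}

/-- The model of `V = ⋀^k(ℂ^J)`: coordinates with respect to the standard basis
`(e_I)`, `I` a `k`-element subset of `J`. -/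
abbrev V (n k : ℕ) := KSub n k → ℂ

/-- The wedge product of `k` vectors of `ℂ^n` as an element of `V`:
its coordinate at a `k`-subset `I` is the determinant of the values of the vectors at the
elements of `I` listed in increasing order. -/
def wedgek (v : Fin k → Fin n → ℂ) : V n k :=
  fun I => Matrix.det (Matrix.of fun (l l' : Fin k) => v l (I.1.orderIsoOfFin I.2 l').1)

/-- `e_T = e_{i_1} ∧ ⋯ ∧ e_{i_k}` for an ordered `k`-tuple `T = (i_1,…,i_k)`. -/
def eT (T : Fin k → Fin n) : V n k :=
  wedgek (fun l => Pi.single (T l) (1 : ℂ))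

/-- A subset `S ⊆ J` is independent if the vectors `(b_j)_{j∈S}` are linearly
independent. -/
def Indep (b : Fin n → Fin k → ℂ) (S : Finset (Fin n)) : Prop :=
  LinearIndependent ℂ (fun j : S => b j)

/-- A circuit: a dependent set all of whose proper subsets are independent. -/
def Circuit (b : Fin n → Fin k → ℂ) (S : Finset (Fin n)) : Prop :=
  ¬ Indep b S ∧ ∀ S' ⊂ S, Indep b S'

/-- The projection `ρ : V → V`, `ρ(e_I) = e_I` for `I` independent, `ρ(e_I) = 0` for
`I` dependent. -/
def rho (b : Fin n → Fin k → ℂ) (u : V n k) : V n k :=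
  fun I => if Indep b I.1 then u I else 0

/-- The contravariant form
`S_a(u,v) = ∑_{I independent} (∏_{i∈I} a_i) u_I v_I`. -/
def Sform (b : Fin n → Fin k → ℂ) (a : Fin n → ℂ) (u v : V n k) : ℂ :=
  ∑ I : KSub n k, if Indep b I.1 then (∏ i ∈ I.1, a i) * u I * v I else 0

/-- The `k`-tuple `(j, i_1, …, i_{k−1})` where `(i_1,…,i_{k−1})` lists `I'`
in increasing order. -/
def consTuple (hk : 0 < k) (j : Fin n) (I' : Finset (Fin n)) (hI' : I'.card = k - 1) :
    Fin k → Fin n :=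
  fun l => if hl : (l : ℕ) = 0 then j
    else (I'.orderIsoOfFin hI' ⟨(l : ℕ) - 1, by have := l.isLt; omega⟩).1

/-- `D_{I'} = ρ(∑_{j∈J} e_j ∧ e_{i_1} ∧ ⋯ ∧ e_{i_{k−1}})` for a `(k−1)`-subset
`I' = {i_1 < … < i_{k−1}}`. -/
def Delem (b : Fin n → Fin k → ℂ) (hk : 0 < k)
    (I' : Finset (Fin n)) (hI' : I'.card = k - 1) : V n k :=
  rho b (∑ j : Fin n, eT (consTuple hk j I' hI'))

/-- The space of singular vectors:
`Sing_a = {v ∈ range ρ | S_a(D_{I'}, v) = 0 for all independent (k−1)-subsets I'}`. -/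
def SingA (b : Fin n → Fin k → ℂ) (a : Fin n → ℂ) (hk : 0 < k) : Set (V n k) :=
  {v | (∃ u, rho b u = v) ∧
    ∀ (I' : Finset (Fin n)) (hI' : I'.card = k - 1), Indep b I' →
      Sform b a (Delem b hk I' hI') v = 0}

/-- The span of the elements `D_{I'}`, `I'` independent `(k−1)`-subsets. -/
def Dspan (b : Fin n → Fin k → ℂ) (hk : 0 < k) : Submodule ℂ (V n k) :=
  Submodule.span ℂ {w | ∃ (I' : Finset (Fin n)) (hI' : I'.card = k - 1),
    Indep b I' ∧ w = Delem b hk I' hI'}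

/-- Hypothesis (H1): the restriction of `S_a` to `span{D_{I'}}` is nondegenerate. -/
def H1 (b : Fin n → Fin k → ℂ) (a : Fin n → ℂ) (hk : 0 < k) : Prop :=
  ∀ w ∈ Dspan b hk, (∀ w' ∈ Dspan b hk, Sform b a w w' = 0) → w = 0

/-- `π` is the `S_a`-orthogonal projection of `range ρ` onto `Sing_a` (along
`span{D_{I'}}`), extended to `V` by `π(v) = π(ρ(v))`. -/
def IsProj (b : Fin n → Fin k → ℂ) (a : Fin n → ℂ) (hk : 0 < k)
    (π : V n k →ₗ[ℂ] V n k) : Prop :=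
  ∀ v, π v ∈ SingA b a hk ∧ rho b v - π v ∈ Dspan b hk

/-! ## Elementary subarrangements -/

/-- An elementary subarrangement of type `λ = (λ_1,…,λ_m)` of the arrangement with
normals `b`: pairwise disjoint subsets `J_1,…,J_m ⊆ J` with `|J_h| = λ_h + 1`,
`dim span{b_j : j ∈ J_1 ∪ ⋯ ∪ J_h} = λ_1 + ⋯ + λ_h`, and the same after deleting any
single `j ∈ J_h` from `J_1 ∪ ⋯ ∪ J_h`. -/
structure Elementary (n k : ℕ) (b : Fin n → Fin k → ℂ) where
  m : ℕ
  lam : Fin m → ℕ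
  Jset : Fin m → Finset (Fin n)
  lam_pos : ∀ h, 0 < lam h
  lam_sum : ∑ h, lam h = k
  disj : ∀ h h', h ≠ h' → Disjoint (Jset h) (Jset h')
  card_eq : ∀ h, (Jset h).card = lam h + 1
  rank_eq : ∀ h, Module.finrank ℂ
      (Submodule.span ℂ (b '' {j | ∃ h' ≤ h, j ∈ Jset h'}))
      = ∑ h' ∈ Finset.univ.filter (fun h' => h' ≤ h), lam h'
  rank_erase : ∀ h, ∀ j ∈ Jset h, Module.finrank ℂ
      (Submodule.span ℂ (b '' ({j' | ∃ h' ≤ h, j' ∈ Jset h'} \ {j})))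
      = ∑ h' ∈ Finset.univ.filter (fun h' => h' ≤ h), lam h'

variable {b : Fin n → Fin k → ℂ}

/-- The `i`-th element (in increasing order) of `J_h`. -/
def Elementary.elt (A : Elementary n k b) (h : Fin A.m) (i : Fin (A.lam h + 1)) :
    Fin n :=
  ((A.Jset h).orderIsoOfFin (A.card_eq h) i).1

lemma Elementary.elt_mem (A : Elementary n k b) (h : Fin A.m) (i : Fin (A.lam h + 1)) :
    A.elt h i ∈ A.Jset h :=
  ((A.Jset h).orderIsoOfFin (A.card_eq h) i).2

lemma Elementary.card_erase (A : Elementary n k b) (h : Fin A.m)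
    (i : Fin (A.lam h + 1)) :
    ((A.Jset h).erase (A.elt h i)).card = A.lam h := by
  rw [Finset.card_erase_of_mem (A.elt_mem h i), A.card_eq]
  omega

/-- The `λ_h`-tuple listing `J_h ∖ {j_i^h}` in increasing order. -/
def Elementary.omit (A : Elementary n k b) (h : Fin A.m) (i : Fin (A.lam h + 1))
    (l : Fin (A.lam h)) : Fin n :=
  (((A.Jset h).erase (A.elt h i)).orderIsoOfFin (A.card_erase h i) l).1

lemma concatLen {α : Type*} {m k : ℕ} (lam : Fin m → ℕ) (hsum : ∑ h, lam h = k)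
    (f : (h : Fin m) → Fin (lam h) → α) :
    ((List.finRange m).flatMap fun h => List.ofFn (f h)).length = k := by
  rw [List.length_flatMap]
  simp only [List.map_map, Function.comp_def, List.length_ofFn]
  rw [← Fin.sum_univ_def]
  exact hsum

/-- The concatenation of the tuples `f h : Fin (lam h) → α`, `h = 0, …, m−1`, in
order, as a single `k`-tuple. -/
def concatTuple {α : Type*} {m k : ℕ} (lam : Fin m → ℕ) (hsum : ∑ h, lam h = k)
    (f : (h : Fin m) → Fin (lam h) → α) : Fin k → α :=
  fun l => ((List.finRange m).flatMap fun h => List.ofFn (f h)).get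
    (Fin.cast (concatLen lam hsum f).symm l)

/-- `λ^{h−1} + i` as an element of `Fin k`: the position of the `i`-th slot of the
`h`-th block in the concatenation. -/
def blockIdx {m k : ℕ} (lam : Fin m → ℕ) (hsum : ∑ h, lam h = k)
    (h : Fin m) (i : Fin (lam h)) : Fin k :=
  ⟨(∑ h' ∈ Finset.univ.filter (fun h' => h' < h), lam h') + (i : ℕ), by
    have h1 : (∑ h' ∈ Finset.univ.filter (fun h' => h' < h), lam h') + lam h
        ≤ ∑ h', lam h' := by
      have hins : h ∉ Finset.univ.filter (fun h' => h' < h) := by simp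
      calc (∑ h' ∈ Finset.univ.filter (fun h' => h' < h), lam h') + lam h
          = ∑ h' ∈ insert h (Finset.univ.filter (fun h' => h' < h)), lam h' := by
            rw [Finset.sum_insert hins]; ring
        _ ≤ ∑ h', lam h' := Finset.sum_le_sum_of_subset (Finset.subset_univ _)
    have h2 := i.isLt
    omega⟩

/-- The singular element `s(J_1,…,J_m) = σ_1 ∧ ⋯ ∧ σ_m`, expanded by multilinearity:
`σ_h = ∑_i (−1)^{i+1} a_{j_i^h} (wedge of J_h ∖ {j_i^h} in increasing order)`
(zero-based signs). -/
def Elementary.sElem (A : Elementary n k b) (a : Fin n → ℂ) : V n k :=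
  ∑ t : (h : Fin A.m) → Fin (A.lam h + 1),
    (∏ h, (-1 : ℂ) ^ (t h : ℕ) * a (A.elt h (t h))) •
      eT (concatTuple A.lam A.lam_sum (fun h => A.omit h (t h)))

/-- `J_λ = J_1 ∪ ⋯ ∪ J_m`. -/
def Elementary.JLam (A : Elementary n k b) : Finset (Fin n) :=
  Finset.univ.biUnion A.Jset

/-- A `k`-subset `I ⊆ J` is a distinguished element of `(J_1,…,J_m)` if `I ⊆ J_λ`
and `|I ∩ J_h| = λ_h` for all `h`. -/
def Elementary.Distinguished (A : Elementary n k b) (I : Finset (Fin n)) : Prop :=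
  I.card = k ∧ I ⊆ A.JLam ∧ ∀ h, (I ∩ A.Jset h).card = A.lam h

/-- `X_h^* = span{b_j : j ∈ J_1 ∪ ⋯ ∪ J_h}`. -/
def Elementary.Xstar (A : Elementary n k b) (h : Fin A.m) :
    Submodule ℂ (Fin k → ℂ) :=
  Submodule.span ℂ (b '' {j | ∃ h' ≤ h, j ∈ A.Jset h'})

/-- `a(J_λ, J, h) = ∑_{j ∈ J, b_j ∉ X_h^*} a_j`. -/
def Elementary.awt (A : Elementary n k b) (a : Fin n → ℂ) (h : Fin A.m) : ℂ :=
  ∑ j : Fin n, if b j ∈ A.Xstar h then 0 else a j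

/-- `a_J = ∑_{j∈J} a_j`. -/
def aJ (n : ℕ) (a : Fin n → ℂ) : ℂ := ∑ j : Fin n, a j

/-- `a(J_λ, J) = a_J ∏_{h=1}^{m−1} a(J_λ, J, h)`. -/
def Elementary.aW (A : Elementary n k b) (a : Fin n → ℂ) : ℂ :=
  aJ n a * ∏ h ∈ Finset.univ.filter (fun h : Fin A.m => (h : ℕ) + 1 < A.m), A.awt a h

/-- Hypothesis (H2): `a(J_λ, J) ≠ 0` for every elementary subarrangement. -/
def H2 (b : Fin n → Fin k → ℂ) (a : Fin n → ℂ) : Prop :=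
  ∀ A : Elementary n k b, A.aW a ≠ 0

/-- The coefficient of `e_T` in `w`, for an ordered tuple `T` with underlying set
`I` (of cardinality `k`): since `e_T = ±e_I`, it equals `e_T(I) ⋅ w(I)`. -/
def coeffAt (T : Fin k → Fin n) (I : KSub n k) (w : V n k) : ℂ :=
  eT T I * w I

end ArrPaper

open ArrPaper

namespace ArrPaper

/-- For a distinguished element `I` of `(J_1,…,J_m)`, the ordered `k`-tuple obtained by
concatenating the increasing lists of `I ∩ J_1, …, I ∩ J_m`. -/
def Elementary.concatI {n k : ℕ} {b : Fin n → Fin k → ℂ} (A : Elementary n k b)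
    (I : Finset (Fin n)) (hcard : ∀ h, (I ∩ A.Jset h).card = A.lam h) :
    Fin k → Fin n :=
  concatTuple A.lam A.lam_sum
    (fun h l => ((I ∩ A.Jset h).orderIsoOfFin (hcard h) l).1)

end ArrPaper

namespace ArrPaper

section Wedge

variable {n k : ℕ}

lemma eT_apply_eq_zero {T : Fin k → Fin n} {I : KSub n k}
    (hT : Finset.univ.image T ≠ I.1) : eT T I = 0 := by
  by_cases hinj : Function.Injective T
  · obtain ⟨l, hl⟩ : ∃ l, T l ∉ I.1 := by
      by_contra! hsub
      refine hT (Finset.eq_of_subset_of_card_le (fun x hx => ?_) ?_)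
      · obtain ⟨l, -, rfl⟩ := Finset.mem_image.mp hx
        exact hsub l
      · rw [Finset.card_image_of_injective _ hinj, Finset.card_univ, Fintype.card_fin, I.2]
    refine Matrix.det_eq_zero_of_row_eq_zero l fun l' => Pi.single_eq_of_ne ?_ _
    exact fun he => hl (he ▸ (I.1.orderIsoOfFin I.2 l').2)
  · obtain ⟨l₁, l₂, heq, hne⟩ := Function.not_injective_iff.mp hinj
    exact Matrix.det_zero_of_row_eq hne (by ext; simp [heq])

lemma eT_orderIsoOfFin_perm (I : KSub n k) (σ : Equiv.Perm (Fin k)) :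
    eT (fun l => (I.1.orderIsoOfFin I.2 (σ l)).1) I = ((Equiv.Perm.sign σ : ℤ) : ℂ) := by
  have hperm : (Matrix.of fun l l' => (Pi.single (I.1.orderIsoOfFin I.2 (σ l)).1 (1 : ℂ) :
      Fin n → ℂ) (I.1.orderIsoOfFin I.2 l').1) = σ.permMatrix ℂ := by
    ext l l'
    simp [Pi.single_apply, PEquiv.toMatrix_apply, eq_comm]
  simp only [eT, wedgek, hperm, Matrix.det_permutation]

lemma eT_apply_mul_self {T : Fin k → Fin n} {I : KSub n k}
    (hT : Finset.univ.image T = I.1) : eT T I * eT T I = 1 := by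
  have hmem (l : Fin k) : T l ∈ I.1 := hT ▸ Finset.mem_image_of_mem T (Finset.mem_univ l)
  have hinj : Function.Injective T := by
    have hcard : (Finset.univ.image T).card = (Finset.univ : Finset (Fin k)).card := by
      rw [hT, I.2, Finset.card_univ, Fintype.card_fin]
    exact fun l₁ l₂ h => Finset.card_image_iff.mp hcard (by simp) (by simp) h
  let σ : Equiv.Perm (Fin k) := Equiv.ofBijective
    (fun l => (I.1.orderIsoOfFin I.2).symm ⟨T l, hmem l⟩)
    (Finite.injective_iff_bijective.mp fun l₁ l₂ h => hinj (by simpa using h))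
  have hTσ : T = fun l => (I.1.orderIsoOfFin I.2 (σ l)).1 := by
    funext l
    simp [σ]
  rw [hTσ, eT_orderIsoOfFin_perm]
  rcases Int.units_eq_one_or (Equiv.Perm.sign σ) with h | h <;> simp [h]

lemma Sform_eT {b : Fin n → Fin k → ℂ} {a : Fin n → ℂ} (w : V n k) {T : Fin k → Fin n}
    {L : Finset (Fin n)} (hLk : L.card = k) (hT : Finset.univ.image T = L) (hL : Indep b L) :
    Sform b a w (eT T) = (∏ i ∈ L, a i) * w ⟨L, hLk⟩ * eT T ⟨L, hLk⟩ := by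
  unfold Sform
  rw [Fintype.sum_eq_single ⟨L, hLk⟩ fun I hI => ?_, if_pos hL]
  rw [eT_apply_eq_zero fun h => hI (Subtype.ext (h.symm.trans hT)), mul_zero, ite_self]

end Wedge

lemma exists_concatTuple_eq_iff {α : Type*} {m k : ℕ} (lam : Fin m → ℕ)
    (hsum : ∑ h, lam h = k) (f : (h : Fin m) → Fin (lam h) → α) (x : α) :
    (∃ l, concatTuple lam hsum f l = x) ↔ ∃ h i, f h i = x := by
  have hmem :
      x ∈ (List.finRange m).flatMap (fun h => List.ofFn (f h)) ↔ ∃ h i, f h i = x := by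
    simp [List.mem_flatMap, List.mem_ofFn]
  rw [← hmem, List.mem_iff_get]
  exact ⟨fun ⟨l, hl⟩ => ⟨_, hl⟩,
    fun ⟨l, hl⟩ => ⟨Fin.cast (concatLen lam hsum f) l, hl⟩⟩

namespace Elementary

variable {n k : ℕ} {b : Fin n → Fin k → ℂ} (A : Elementary n k b)

lemma elt_injective (h : Fin A.m) : Function.Injective (A.elt h) := fun _ _ e =>
  ((A.Jset h).orderIsoOfFin (A.card_eq h)).injective (Subtype.ext e)

lemma exists_omit_eq {h : Fin A.m} {t i : Fin (A.lam h + 1)} (hi : i ≠ t) :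
    ∃ l, A.omit h t l = A.elt h i := by
  have hmem : A.elt h i ∈ (A.Jset h).erase (A.elt h t) :=
    Finset.mem_erase.mpr ⟨fun he => hi (A.elt_injective h he), A.elt_mem h i⟩
  obtain ⟨l, hl⟩ :=
    (((A.Jset h).erase (A.elt h t)).orderIsoOfFin (A.card_erase h t)).surjective ⟨_, hmem⟩
  exact ⟨l, congrArg Subtype.val hl⟩

lemma image_concatI {M : Finset (Fin n)} (hMc : ∀ h, (M ∩ A.Jset h).card = A.lam h)
    (hM : M ⊆ A.JLam) : Finset.univ.image (A.concatI M hMc) = M := by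
  ext x
  rw [Finset.mem_image]
  simp only [Finset.mem_univ, true_and, concatI, exists_concatTuple_eq_iff]
  constructor
  · rintro ⟨h, i, rfl⟩
    exact Finset.mem_of_mem_inter_left ((M ∩ A.Jset h).orderIsoOfFin (hMc h) i).2
  · intro hx
    obtain ⟨h, -, hxh⟩ := Finset.mem_biUnion.mp (hM hx)
    obtain ⟨i, hi⟩ := ((M ∩ A.Jset h).orderIsoOfFin (hMc h)).surjective
      ⟨x, Finset.mem_inter.mpr ⟨hx, hxh⟩⟩
    exact ⟨h, i, congrArg Subtype.val hi⟩

lemma concatI_eq_concatTuple_omit {M : Finset (Fin n)}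
    (hMc : ∀ h, (M ∩ A.Jset h).card = A.lam h) {w : (h : Fin A.m) → Fin (A.lam h + 1)}
    (hw : ∀ h, A.Jset h \ M = {A.elt h (w h)}) :
    A.concatI M hMc = concatTuple A.lam A.lam_sum (fun h => A.omit h (w h)) := by
  have hMJ (h : Fin A.m) : M ∩ A.Jset h = (A.Jset h).erase (A.elt h (w h)) := by
    rw [Finset.erase_eq, ← hw h, Finset.sdiff_sdiff_self_left, Finset.inter_comm]
  simp only [concatI, Finset.coe_orderIsoOfFin_apply, hMJ]
  rfl

lemma sElem_apply (a : Fin n → ℂ) {M : Finset (Fin n)} (hMk : M.card = k)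
    (hMc : ∀ h, (M ∩ A.Jset h).card = A.lam h) {w : (h : Fin A.m) → Fin (A.lam h + 1)}
    (hw : ∀ h, A.Jset h \ M = {A.elt h (w h)}) :
    A.sElem a ⟨M, hMk⟩ = (∏ h, (-1 : ℂ) ^ (w h : ℕ) * a (A.elt h (w h)))
      * eT (A.concatI M hMc) ⟨M, hMk⟩ := by
  rw [A.concatI_eq_concatTuple_omit hMc hw, sElem, Finset.sum_apply,
    Fintype.sum_eq_single w fun t ht => ?_]
  · rfl
  -- for `t ≠ w` some `j_{w h}^h ∉ M` occurs in the tuple, so its wedge vanishes at `M`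
  obtain ⟨h, hne⟩ := Function.ne_iff.mp ht
  obtain ⟨l, hl⟩ := A.exists_omit_eq (Ne.symm hne)
  have hnot : A.elt h (w h) ∉ M :=
    (Finset.mem_sdiff.mp ((hw h).symm ▸ Finset.mem_singleton_self _)).2
  obtain ⟨l', hl'⟩ := (exists_concatTuple_eq_iff A.lam A.lam_sum
    (fun h => A.omit h (t h)) _).mpr ⟨h, l, hl⟩
  rw [Pi.smul_apply, eT_apply_eq_zero fun him => hnot ?_, smul_zero]
  exact (Finset.ext_iff.mp him _).mp (Finset.mem_image.mpr ⟨l', Finset.mem_univ _, hl'⟩)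

lemma mem_span_image_sdiff {h : Fin A.m} {j : Fin n} (hj : j ∈ A.Jset h) :
    b j ∈ Submodule.span ℂ (b '' ({j' | ∃ h' ≤ h, j' ∈ A.Jset h'} \ {j})) := by
  have hle := Submodule.span_mono (R := ℂ) (Set.image_mono (f := b)
    (Set.sdiff_subset (s := {j' | ∃ h' ≤ h, j' ∈ A.Jset h'}) (t := {j})))
  rw [Submodule.eq_of_le_of_finrank_eq hle ((A.rank_erase h j hj).trans (A.rank_eq h).symm)]
  exact Submodule.subset_span ⟨j, ⟨h, le_rfl, hj⟩, rfl⟩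

lemma mem_span_of_sdiff_subset_singleton {L : Finset (Fin n)}
    (hL : ∀ h, ∃ j, A.Jset h \ L ⊆ {j}) (h : Fin A.m) :
    ∀ j ∈ A.Jset h, b j ∈ Submodule.span ℂ (b '' L) := by
  induction h using WellFoundedLT.induction with
  | ind h ih =>
  intro j hj
  by_cases hjL : j ∈ L
  · exact Submodule.subset_span ⟨j, hjL, rfl⟩
  refine Submodule.span_le.mpr ?_ (A.mem_span_image_sdiff hj)
  rintro _ ⟨j', ⟨⟨h', hh', hj'⟩, hne⟩, rfl⟩
  rcases hh'.lt_or_eq with hlt | rfl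
  · exact ih h' hlt j' hj'
  · obtain ⟨j₀, hj₀⟩ := hL h'
    have hj'L : j' ∈ L := by
      by_contra hj'L
      exact hne ((Finset.mem_singleton.mp (hj₀ (Finset.mem_sdiff.mpr ⟨hj', hj'L⟩))).trans
        (Finset.mem_singleton.mp (hj₀ (Finset.mem_sdiff.mpr ⟨hj, hjL⟩))).symm)
    exact Submodule.subset_span ⟨j', hj'L, rfl⟩

lemma finrank_span_JLam : Module.finrank ℂ (Submodule.span ℂ (b '' A.JLam)) = k := by
  rcases Nat.eq_zero_or_pos A.m with hm | hm
  · have : IsEmpty (Fin A.m) := hm ▸ Fin.isEmpty'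
    rw [show A.JLam = ∅ by simp [JLam], Finset.coe_empty, Set.image_empty,
      Submodule.span_empty, finrank_bot]
    simpa using A.lam_sum
  · let last : Fin A.m := ⟨A.m - 1, by omega⟩
    have hlast (h : Fin A.m) : h ≤ last := Fin.mk_le_mk.mpr (by omega)
    have hJ : {j | ∃ h ≤ last, j ∈ A.Jset h} = ↑A.JLam := by
      ext j
      simp [JLam, hlast]
    rw [← hJ, A.rank_eq last, Finset.filter_true_of_mem fun h _ => hlast h, A.lam_sum]

lemma indep_of_sdiff_subset_singleton {L : Finset (Fin n)} (hLk : L.card = k)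
    (hLJ : L ⊆ A.JLam) (hL : ∀ h, ∃ j, A.Jset h \ L ⊆ {j}) : Indep b L := by
  have hspan : Submodule.span ℂ (b '' L) = Submodule.span ℂ (b '' A.JLam) := by
    refine le_antisymm (Submodule.span_mono (Set.image_mono hLJ)) (Submodule.span_le.mpr ?_)
    rintro _ ⟨j, hj, rfl⟩
    obtain ⟨h, -, hjh⟩ := Finset.mem_biUnion.mp hj
    exact A.mem_span_of_sdiff_subset_singleton hL h j hjh
  have hrange : Set.range (fun j : L => b j) = b '' L := (Set.image_eq_range b L).symm
  rw [Indep, linearIndependent_iff_card_eq_finrank_span, Set.finrank, Fintype.card_coe, hLk,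
    hrange, hspan, A.finrank_span_JLam]

lemma prod_JLam {M : Type*} [CommMonoid M] (f : Fin n → M) {L : Finset (Fin n)}
    (hLJ : L ⊆ A.JLam) {s : (h : Fin A.m) → Fin (A.lam h + 1)}
    (hs : ∀ h, A.Jset h \ L = {A.elt h (s h)}) :
    ∏ j ∈ A.JLam, f j = (∏ h, f (A.elt h (s h))) * ∏ j ∈ L, f j := by
  have hsdiff : A.JLam \ L = Finset.univ.biUnion fun h => {A.elt h (s h)} := by
    simp only [← hs]
    ext j
    simp [JLam]
  have hdisj : Set.PairwiseDisjoint ↑(Finset.univ : Finset (Fin A.m))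
      fun h => ({A.elt h (s h)} : Finset (Fin n)) := fun h _ h' _ hne =>
    Finset.disjoint_singleton.mpr fun he =>
      Finset.disjoint_left.mp (A.disj h h' hne) (A.elt_mem h (s h)) (he ▸ A.elt_mem h' (s h'))
  rw [← Finset.prod_sdiff hLJ, hsdiff, Finset.prod_biUnion hdisj]
  simp

end Elementary

end ArrPaper

theorem stmt11_general (n k : ℕ)
    (b : Fin n → Fin k → ℂ)
    (a : Fin n → ℂ) (ha : ∀ j, a j ≠ 0)
    (A : Elementary n k b)
    (I L : Finset (Fin n))
    (hI : A.Distinguished I) (hL : A.Distinguished L)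
    (hIk : I.card = k) (hLk : L.card = k)
    (hIc : ∀ h, (I ∩ A.Jset h).card = A.lam h)
    (hLc : ∀ h, (L ∩ A.Jset h).card = A.lam h)
    -- `u h`, `s h`: positions (in the increasing ordering of `J_h`) of the unique
    -- elements of `J_h ∖ I` and `J_h ∖ L`
    (u s : (h : Fin A.m) → Fin (A.lam h + 1))
    (hu : ∀ h, A.Jset h \ I = {A.elt h (u h)})
    (hs : ∀ h, A.Jset h \ L = {A.elt h (s h)})
    -- the sign normalizing the singular element with respect to `T_I`
    (eps : ℂ)
    (hcoeff : coeffAt (A.concatI I hIc) ⟨I, hIk⟩ (eps • A.sElem a)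
      = ∏ h, a (A.elt h (u h))) :
    Sform b a (eps • A.sElem a) (eT (A.concatI L hLc))
      = (∏ h, (-1 : ℂ) ^ ((u h : ℕ) + (s h : ℕ))) * ∏ j ∈ A.JLam, a j := by
  have heI := eT_apply_mul_self (I := ⟨I, hIk⟩) (A.image_concatI hIc hI.2.1)
  have heL := eT_apply_mul_self (I := ⟨L, hLk⟩) (A.image_concatI hLc hL.2.1)
  have hindep : Indep b L :=
    A.indep_of_sdiff_subset_singleton hLk hL.2.1 fun h => ⟨_, (hs h).subset⟩
  have hsign : (∏ h, (-1 : ℂ) ^ (u h : ℕ)) * ∏ h, (-1 : ℂ) ^ (u h : ℕ) = 1 := by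
    rw [← Finset.prod_mul_distrib]
    simp [← mul_pow]
  have heps : eps = ∏ h, (-1 : ℂ) ^ (u h : ℕ) := by
    rw [coeffAt, Pi.smul_apply, smul_eq_mul, A.sElem_apply a hIk hIc hu,
      Finset.prod_mul_distrib] at hcoeff
    have hQ : ∏ h, a (A.elt h (u h)) ≠ 0 := Finset.prod_ne_zero_iff.mpr fun h _ => ha _
    have h1 : eps * ∏ h, (-1 : ℂ) ^ (u h : ℕ) = 1 := mul_right_cancel₀ hQ <| by
      linear_combination
        hcoeff - eps * (∏ h, (-1 : ℂ) ^ (u h : ℕ)) * (∏ h, a (A.elt h (u h))) * heI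
    linear_combination (∏ h, (-1 : ℂ) ^ (u h : ℕ)) * h1 - eps * hsign
  rw [Sform_eT _ hLk (A.image_concatI hLc hL.2.1) hindep, Pi.smul_apply, smul_eq_mul,
    A.sElem_apply a hLk hLc hs, A.prod_JLam a hL.2.1 hs, heps]
  simp only [pow_add, Finset.prod_mul_distrib]
  linear_combination (∏ h, (-1 : ℂ) ^ (u h : ℕ)) * (∏ h, (-1 : ℂ) ^ (s h : ℕ)) *
    (∏ h, a (A.elt h (s h))) * (∏ j ∈ L, a j) * heL

/-- **Formula (6.5) of the paper.** For distinguished elements `I`, `L` of an elementary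
subarrangement `(J_1,…,J_m)` with complementary positions `u_h`, `s_h` (`0`-based), the
normalized singular element `s_{T_I}` pairs with `e_{T_L}` to
`(∏_h (−1)^{u_h+s_h}) ∏_{j∈J_λ} a_j`. -/
theorem stmt11 (n k : ℕ) (hk : 0 < k) (hkn : k < n)
    (b : Fin n → Fin k → ℂ) (hb0 : ∀ j, b j ≠ 0)
    (hbspan : Submodule.span ℂ (Set.range b) = ⊤)
    (a : Fin n → ℂ) (ha : ∀ j, a j ≠ 0)
    (A : Elementary n k b)
    (I L : Finset (Fin n))
    (hI : A.Distinguished I) (hL : A.Distinguished L)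
    (hIk : I.card = k) (hLk : L.card = k)
    (hIc : ∀ h, (I ∩ A.Jset h).card = A.lam h)
    (hLc : ∀ h, (L ∩ A.Jset h).card = A.lam h)
    -- `u h`, `s h`: positions (in the increasing ordering of `J_h`) of the unique
    -- elements of `J_h ∖ I` and `J_h ∖ L`
    (u s : (h : Fin A.m) → Fin (A.lam h + 1))
    (hu : ∀ h, A.Jset h \ I = {A.elt h (u h)})
    (hs : ∀ h, A.Jset h \ L = {A.elt h (s h)})
    -- the sign normalizing the singular element with respect to `T_I`
    (eps : ℂ) (heps : eps = 1 ∨ eps = -1)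
    (hcoeff : coeffAt (A.concatI I hIc) ⟨I, hIk⟩ (eps • A.sElem a)
      = ∏ h, a (A.elt h (u h))) :
    Sform b a (eps • A.sElem a) (eT (A.concatI L hLc))
      = (∏ h, (-1 : ℂ) ^ ((u h : ℕ) + (s h : ℕ))) * ∏ j ∈ A.JLam, a j :=
  stmt11_general n k b a ha A I L hI hL hIk hLk hIc hLc u s hu hs eps hcoeff
end
end

section
/- Let (J_1,…,J_m) be an elementary subarrangement of type λ with prepotential of first kind P_{J_λ}, and let I = {i_1,…,i_k} and L = {l_1,…,l_k} be independent k-element subsets of J. If I is not a distinguished element of (J_1,…,J_m) or L is not a distinguished element of (J_1,…,J_m), then the iterated partial derivative ∂^{2k} P_{J_λ} / ∂z_{i_1} ⋯ ∂z_{i_k} ∂z_{l_1} ⋯ ∂z_{l_k} is the zero polynomial. -/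
open scoped BigOperators
open Classical

noncomputable section

namespace ArrPaper

variable {n k : ℕ} {b : Fin n → Fin k → ℂ}

/-- The block determinant `D_{i,h} = d_{(j_1^h,…,ĵ_i^h,…,j_{λ_h+1}^h);h}`, computed in
the adapted coordinates `cC`: its `(r,ℓ)` entry is the coordinate of `b` at the
`ℓ`-th element of `J_h ∖ {j_i^h}` with respect to the basis vector number
`λ^{h−1} + r`. -/
def Elementary.DD (A : Elementary n k b) (cC : Fin n → Fin k → ℂ)
    (h : Fin A.m) (i : Fin (A.lam h + 1)) : ℂ :=
  Matrix.det (Matrix.of fun (r l : Fin (A.lam h)) =>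
    cC (A.omit h i l) (blockIdx A.lam A.lam_sum h r))

/-- The linear form `f_{J_λ,h}`, as a polynomial in `z_1,…,z_n`. -/
def Elementary.fpol (A : Elementary n k b) (cC : Fin n → Fin k → ℂ)
    (eN : Fin A.m → Fin n → ℂ) (h : Fin A.m) : MvPolynomial (Fin n) ℂ :=
  (∑ i : Fin (A.lam h + 1),
      MvPolynomial.C ((-1 : ℂ) ^ (i : ℕ) * A.DD cC h i) * MvPolynomial.X (A.elt h i))
    + ∑ j : Fin n, MvPolynomial.C (eN h j) * MvPolynomial.X j

/-- The prepotential of first kind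
`P_{J_λ} = ∏_h (∏_{j∈J_h} a_j) f_{J_λ,h}^{2λ_h} / ((2λ_h)! (∏_i D_{i,h})²)`. -/
def Elementary.prepot (A : Elementary n k b) (a : Fin n → ℂ)
    (cC : Fin n → Fin k → ℂ) (eN : Fin A.m → Fin n → ℂ) : MvPolynomial (Fin n) ℂ :=
  ∏ h : Fin A.m,
    MvPolynomial.C ((∏ j ∈ A.Jset h, a j) *
        ((Nat.factorial (2 * A.lam h) : ℂ) * (∏ i, A.DD cC h i) ^ 2)⁻¹) *
      (A.fpol cC eN h) ^ (2 * A.lam h)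

/-- Admissibility of the choices `(sB, cC, eN)` for an elementary subarrangement:
`sB` is a unimodular basis adapted to the filtration `X_1^* ⊆ ⋯ ⊆ X_m^*`, `cC` gives
the coordinates of the `b_j` in this basis, and `eN h` gives the coefficients `e_j`
(supported on `J_1 ∪ ⋯ ∪ J_{h−1}`) completing the linear relation defining
`f_{J_λ,h}`. -/
def Elementary.ChoiceOK (A : Elementary n k b)
    (sB : Fin k → Fin k → ℂ) (cC : Fin n → Fin k → ℂ)
    (eN : Fin A.m → Fin n → ℂ) : Prop :=
  Matrix.det (Matrix.of fun (i l : Fin k) => sB l i) = 1 ∧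
  (∀ j, b j = ∑ i : Fin k, cC j i • sB i) ∧
  (∀ h : Fin A.m, Submodule.span ℂ
      {v : Fin k → ℂ | ∃ i : Fin k,
        (i : ℕ) < ∑ h' ∈ Finset.univ.filter (fun h' => h' ≤ h), A.lam h' ∧ v = sB i}
    = A.Xstar h) ∧
  (∀ h j, eN h j ≠ 0 → ∃ h' < h, j ∈ A.Jset h') ∧
  (∀ h : Fin A.m,
    (∑ i : Fin (A.lam h + 1), ((-1 : ℂ) ^ (i : ℕ) * A.DD cC h i) • b (A.elt h i))
      + ∑ j : Fin n, eN h j • b j = 0)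

/-- Iterated formal partial derivative along a list of variables. -/
def pderivList (L : List (Fin n)) (p : MvPolynomial (Fin n) ℂ) :
    MvPolynomial (Fin n) ℂ :=
  L.foldl (fun q r => MvPolynomial.pderiv r q) p

/-- `d_T`: determinant of the matrix whose `ℓ`-th column is `b (T ℓ)`. -/
def dtup (b : Fin n → Fin k → ℂ) (T : Fin k → Fin n) : ℂ :=
  Matrix.det (Matrix.of fun (r l : Fin k) => b (T l) r)

/-- The potential of first kind: the (finite) sum over all elementary subarrangements
of `(1/a(J_λ,J)) P_{J_λ}`, with the choices in the definition of the prepotentials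
fixed once for each elementary subarrangement. -/
def Potential1 (b : Fin n → Fin k → ℂ) (a : Fin n → ℂ)
    (cC : Elementary n k b → Fin n → Fin k → ℂ)
    (eN : (A : Elementary n k b) → Fin A.m → Fin n → ℂ) : MvPolynomial (Fin n) ℂ :=
  ∑ᶠ A : Elementary n k b, MvPolynomial.C (A.aW a)⁻¹ * A.prepot a (cC A) (eN A)

end ArrPaper

/-!
Weight the variable `z_j` by `0` if `j ∈ J_1 ∪ ⋯ ∪ J_c` and by `1` otherwise. Since the `e_j`
occurring in `f_{J_λ,h}` live on `J_1 ∪ ⋯ ∪ J_{h−1}`, the form `f_{J_λ,h}` has weight `0` for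
`h ≤ c` and at most `1` for `h > c`, so `P_{J_λ}` has weighted degree at most `2(k − λ^c)`.
Each `∂/∂z_j` lowers the weight of every monomial by the weight of `z_j`, so the derivative
vanishes as soon as `|I ∩ (J_1 ∪ ⋯ ∪ J_c)| + |L ∩ (J_1 ∪ ⋯ ∪ J_c)| < 2λ^c`. For independent
sets both terms are at most `λ^c` by condition (i); and if `I` attained `λ^c` for every
`c = 0, …, m`, then `|I ∩ J_h| = λ_h` for all `h` and `I ⊆ J_λ`, so `I` would be distinguished.
-/

namespace MvPolynomial

open Finsupp

variable {σ R : Type*} [CommSemiring R] (w : σ → ℕ)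

theorem weightedTotalDegree_add_le (p q : MvPolynomial σ R) :
    weightedTotalDegree w (p + q) ≤ max (weightedTotalDegree w p) (weightedTotalDegree w q) := by
  classical
  refine Finset.sup_le fun d hd => ?_
  rcases Finset.mem_union.mp (support_add hd) with hd | hd
  · exact le_max_of_le_left (le_weightedTotalDegree w hd)
  · exact le_max_of_le_right (le_weightedTotalDegree w hd)

theorem weightedTotalDegree_sum_le {ι : Type*} (s : Finset ι) (f : ι → MvPolynomial σ R)
    {D : ℕ} (hf : ∀ i ∈ s, weightedTotalDegree w (f i) ≤ D) :
    weightedTotalDegree w (∑ i ∈ s, f i) ≤ D := by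
  classical
  refine Finset.sup_le fun d hd => ?_
  obtain ⟨i, hi, hd⟩ := Finset.mem_biUnion.mp (support_sum hd)
  exact (le_weightedTotalDegree w hd).trans (hf i hi)

theorem weightedTotalDegree_mul_le (p q : MvPolynomial σ R) :
    weightedTotalDegree w (p * q) ≤ weightedTotalDegree w p + weightedTotalDegree w q := by
  classical
  refine Finset.sup_le fun d hd => ?_
  obtain ⟨d₁, hd₁, d₂, hd₂, rfl⟩ := Finset.mem_add.mp (support_mul p q hd)
  rw [map_add]
  exact add_le_add (le_weightedTotalDegree w hd₁) (le_weightedTotalDegree w hd₂)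

theorem weightedTotalDegree_monomial_le (s : σ →₀ ℕ) (c : R) :
    weightedTotalDegree w (monomial s c) ≤ weight w s :=
  Finset.sup_le fun d hd => by rw [Finset.mem_singleton.mp (support_monomial_subset hd)]

theorem weightedTotalDegree_C (c : R) : weightedTotalDegree w (C c : MvPolynomial σ R) = 0 :=
  Nat.le_zero.mp <| by simpa using weightedTotalDegree_monomial_le w 0 c

theorem weightedTotalDegree_prod_le {ι : Type*} (s : Finset ι) (f : ι → MvPolynomial σ R) :
    weightedTotalDegree w (∏ i ∈ s, f i) ≤ ∑ i ∈ s, weightedTotalDegree w (f i) := by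
  classical
  induction s using Finset.induction_on with
  | empty => rw [Finset.prod_empty, ← C_1, weightedTotalDegree_C, Finset.sum_empty]
  | insert i s hi ih =>
    rw [Finset.prod_insert hi, Finset.sum_insert hi]
    exact (weightedTotalDegree_mul_le w _ _).trans (add_le_add_right ih _)

theorem weightedTotalDegree_pow_le (p : MvPolynomial σ R) (e : ℕ) :
    weightedTotalDegree w (p ^ e) ≤ e * weightedTotalDegree w p := by
  simpa using weightedTotalDegree_prod_le w (Finset.range e) fun _ => p

theorem weightedTotalDegree_C_mul_X_le (c : R) (j : σ) :
    weightedTotalDegree w (C c * X j) ≤ w j := by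
  rw [C_mul_X_eq_monomial]
  simpa [weight_single] using weightedTotalDegree_monomial_le w (single j 1) c

theorem add_single_mem_support_of_mem_support_pderiv [DecidableEq σ] {p : MvPolynomial σ R}
    {r : σ} {d : σ →₀ ℕ} (hd : d ∈ (pderiv r p).support) : d + single r 1 ∈ p.support := by
  rw [mem_support_iff, coeff_pderiv] at hd
  exact mem_support_iff.mpr (left_ne_zero_of_mul hd)

end MvPolynomial

theorem List.sum_map_ofFn_orderIsoOfFin {α M : Type*} [LinearOrder α] [AddCommMonoid M]
    {s : Finset α} {k : ℕ} (hs : s.card = k) (f : α → M) :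
    ((List.ofFn fun l => (s.orderIsoOfFin hs l : α)).map f).sum = ∑ j ∈ s, f j := by
  rw [List.map_ofFn, List.sum_ofFn, ← Finset.sum_coe_sort s f]
  exact Fintype.sum_equiv (s.orderIsoOfFin hs).toEquiv _ _ fun _ => rfl

theorem Finset.card_inter_add_sum_ite_mem {α : Type*} [DecidableEq α] (s t : Finset α) :
    (s ∩ t).card + ∑ j ∈ s, (if j ∈ t then 0 else 1) = s.card := by
  rw [Finset.sum_ite, Finset.sum_const_zero, zero_add, Finset.sum_const, smul_eq_mul, mul_one,
    ← Finset.filter_mem_eq_inter, Finset.card_filter_add_card_filter_not]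

namespace ArrPaper

open MvPolynomial Finsupp

variable {n k : ℕ} {b : Fin n → Fin k → ℂ}

theorem pderivList_eq_zero_of_weight_lt (w : Fin n → ℕ) (L : List (Fin n))
    (p : MvPolynomial (Fin n) ℂ) (hp : ∀ d ∈ p.support, weight w d < (L.map w).sum) :
    pderivList L p = 0 := by
  induction L generalizing p with
  | nil => exact support_eq_empty.mp (Finset.eq_empty_of_forall_notMem fun d hd => by
      simpa using hp d hd)
  | cons r L ih =>
    refine ih (pderiv r p) fun d hd => ?_
    have := hp _ (add_single_mem_support_of_mem_support_pderiv hd)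
    rw [map_add, weight_single, one_smul, List.map_cons, List.sum_cons] at this
    omega

theorem Indep.card_inter_le_finrank_span {M : Finset (Fin n)} (hM : Indep b M)
    (S : Finset (Fin n)) :
    (M ∩ S).card ≤ Module.finrank ℂ (Submodule.span ℂ (b '' S)) := by
  have hli : LinearIndependent ℂ fun j : ↥(M ∩ S) => b j :=
    hM.comp (fun j : ↥(M ∩ S) => (⟨j, (Finset.mem_inter.mp j.2).1⟩ : ↥M)) fun _ _ hxy =>
      Subtype.ext (by simpa using congrArg Subtype.val hxy)
  rw [← Fintype.card_coe, ← finrank_span_eq_card hli]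
  refine Submodule.finrank_mono (Submodule.span_mono ?_)
  rintro _ ⟨j, rfl⟩
  exact ⟨j, (Finset.mem_inter.mp j.2).2, rfl⟩

namespace Elementary

variable (A : Elementary n k b)

-- `JBelow c = J_1 ∪ ⋯ ∪ J_c` and `lamBelow c = λ^c`: the blocks are indexed from `0` in `Fin A.m`.
def JBelow (c : ℕ) : Finset (Fin n) :=
  Finset.univ.filter fun j => ∃ h : Fin A.m, (h : ℕ) < c ∧ j ∈ A.Jset h

def lamBelow (c : ℕ) : ℕ :=
  ∑ h ∈ Finset.univ.filter (fun h : Fin A.m => (h : ℕ) < c), A.lam h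

theorem finrank_span_JBelow_le {c : ℕ} (hc : c ≤ A.m) :
    Module.finrank ℂ (Submodule.span ℂ (b '' A.JBelow c)) ≤ A.lamBelow c := by
  rcases c with _ | c
  · have hempty : (A.JBelow 0 : Set (Fin n)) = ∅ := by ext; simp [JBelow]
    rw [hempty, Set.image_empty, Submodule.span_empty, finrank_bot]
    exact Nat.zero_le _
  set H : Fin A.m := ⟨c, hc⟩
  have hJ : (A.JBelow (c + 1) : Set (Fin n)) = {j | ∃ h ≤ H, j ∈ A.Jset h} := by
    ext j
    simp [JBelow, H, Fin.le_iff_val_le_val]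
  have hlam : A.lamBelow (c + 1) = ∑ h ∈ Finset.univ.filter (fun h => h ≤ H), A.lam h := by
    simp only [lamBelow, H, Fin.le_iff_val_le_val, Nat.lt_succ_iff]
  rw [hJ, hlam]
  exact (A.rank_eq H).le

theorem card_inter_JBelow_le {M : Finset (Fin n)} (hM : Indep b M) {c : ℕ} (hc : c ≤ A.m) :
    (M ∩ A.JBelow c).card ≤ A.lamBelow c :=
  (hM.card_inter_le_finrank_span _).trans (A.finrank_span_JBelow_le hc)

theorem card_inter_JBelow_succ (M : Finset (Fin n)) (h : Fin A.m) :
    (M ∩ A.JBelow (h + 1)).card = (M ∩ A.JBelow h).card + (M ∩ A.Jset h).card := by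
  have hsplit : A.JBelow (h + 1) = A.JBelow h ∪ A.Jset h := by
    ext j
    simp only [JBelow, Finset.mem_union, Finset.mem_filter, Finset.mem_univ, true_and]
    constructor
    · rintro ⟨h', hh', hj⟩
      rcases Nat.lt_succ_iff_lt_or_eq.mp hh' with hlt | heq
      · exact Or.inl ⟨h', hlt, hj⟩
      · exact Or.inr (Fin.ext heq ▸ hj)
    · rintro (⟨h', hh', hj⟩ | hj)
      · exact ⟨h', hh'.trans (Nat.lt_succ_self _), hj⟩
      · exact ⟨h, Nat.lt_succ_self _, hj⟩
  have hdisj : Disjoint (A.JBelow h) (A.Jset h) := by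
    refine Finset.disjoint_left.mpr fun j hj hj' => ?_
    obtain ⟨h', hh', hj⟩ := (Finset.mem_filter.mp hj).2
    exact Finset.disjoint_left.mp (A.disj h' h (Fin.ne_of_lt hh')) hj hj'
  rw [hsplit, Finset.inter_union_distrib_left, Finset.card_union_of_disjoint
    (hdisj.mono Finset.inter_subset_right Finset.inter_subset_right)]

theorem lamBelow_succ (h : Fin A.m) : A.lamBelow (h + 1) = A.lamBelow h + A.lam h := by
  have : Finset.univ.filter (fun h' : Fin A.m => (h' : ℕ) < h + 1)
      = insert h (Finset.univ.filter fun h' : Fin A.m => (h' : ℕ) < h) := by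
    ext h'
    simp only [Finset.mem_filter, Finset.mem_univ, true_and, Finset.mem_insert, Fin.ext_iff]
    omega
  rw [lamBelow, this, Finset.sum_insert (by simp), add_comm]
  rfl

theorem JBelow_m : A.JBelow A.m = A.JLam := by
  ext j
  simp [JBelow, JLam]

theorem lamBelow_m : A.lamBelow A.m = k := by
  simpa [lamBelow] using A.lam_sum

theorem exists_card_inter_JBelow_lt {I : Finset (Fin n)} (hI : Indep b I) (hIk : I.card = k)
    (hnd : ¬ A.Distinguished I) : ∃ c ≤ A.m, (I ∩ A.JBelow c).card < A.lamBelow c := by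
  by_contra! hge
  have heq : ∀ c ≤ A.m, (I ∩ A.JBelow c).card = A.lamBelow c := fun c hc =>
    (A.card_inter_JBelow_le hI hc).antisymm (hge c hc)
  refine hnd ⟨hIk, ?_, fun h => ?_⟩
  · have hfull := heq A.m le_rfl
    rw [JBelow_m, lamBelow_m] at hfull
    exact Finset.inter_eq_left.mp
      (Finset.eq_of_subset_of_card_le Finset.inter_subset_left (hfull.trans hIk.symm).ge)
  · have hsucc := heq (h + 1) h.isLt
    rw [card_inter_JBelow_succ, lamBelow_succ, heq h h.isLt.le] at hsucc
    omega

def weightAbove (c : ℕ) (j : Fin n) : ℕ := if j ∈ A.JBelow c then 0 else 1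

variable {A} {cC : Fin n → Fin k → ℂ} {eN : Fin A.m → Fin n → ℂ}

theorem weightedTotalDegree_fpol_le (heN : ∀ h j, eN h j ≠ 0 → ∃ h' < h, j ∈ A.Jset h')
    (w : Fin n → ℕ) {D : ℕ} (h : Fin A.m) (hw : ∀ h' ≤ h, ∀ j ∈ A.Jset h', w j ≤ D) :
    weightedTotalDegree w (A.fpol cC eN h) ≤ D := by
  refine (weightedTotalDegree_add_le w _ _).trans (max_le ?_ ?_)
  · exact weightedTotalDegree_sum_le w _ _ fun i _ =>
      (weightedTotalDegree_C_mul_X_le w _ _).trans (hw h le_rfl _ (A.elt_mem h i))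
  · refine weightedTotalDegree_sum_le w _ _ fun j _ => ?_
    by_cases he : eN h j = 0
    · rw [he, map_zero, zero_mul, weightedTotalDegree_zero]
      exact Nat.zero_le _
    · obtain ⟨h', hh', hj⟩ := heN h j he
      exact (weightedTotalDegree_C_mul_X_le w _ _).trans (hw h' hh'.le j hj)

theorem weightedTotalDegree_prepot_le (heN : ∀ h j, eN h j ≠ 0 → ∃ h' < h, j ∈ A.Jset h')
    (a : Fin n → ℂ) (w : Fin n → ℕ) (D : Fin A.m → ℕ)
    (hw : ∀ h, ∀ h' ≤ h, ∀ j ∈ A.Jset h', w j ≤ D h) :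
    weightedTotalDegree w (A.prepot a cC eN) ≤ ∑ h, 2 * A.lam h * D h := by
  refine (weightedTotalDegree_prod_le w _ _).trans (Finset.sum_le_sum fun h _ => ?_)
  calc _ ≤ weightedTotalDegree w (C _)
          + weightedTotalDegree w (A.fpol cC eN h ^ (2 * A.lam h)) :=
        weightedTotalDegree_mul_le w _ _
    _ ≤ 0 + 2 * A.lam h * D h := by
        rw [weightedTotalDegree_C]
        exact Nat.add_le_add_left ((weightedTotalDegree_pow_le w _ _).trans
          (Nat.mul_le_mul_left _ (weightedTotalDegree_fpol_le heN w h (hw h)))) _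
    _ = 2 * A.lam h * D h := zero_add _

theorem weightedTotalDegree_weightAbove_prepot_add_le
    (heN : ∀ h j, eN h j ≠ 0 → ∃ h' < h, j ∈ A.Jset h') (a : Fin n → ℂ) (c : ℕ) :
    weightedTotalDegree (A.weightAbove c) (A.prepot a cC eN) + 2 * A.lamBelow c ≤ 2 * k := by
  have hdeg := weightedTotalDegree_prepot_le (cC := cC) heN a (A.weightAbove c)
    (fun h => if (h : ℕ) < c then 0 else 1) fun h h' hh' j hj => by
      by_cases hc : (h : ℕ) < c
      · have hjc : j ∈ A.JBelow c :=
          Finset.mem_filter.mpr ⟨Finset.mem_univ _, h', lt_of_le_of_lt hh' hc, hj⟩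
        simp [weightAbove, hjc, hc]
      · simp only [weightAbove, hc, if_false]
        split <;> omega
  have hsplit : A.lamBelow c + ∑ h ∈ Finset.univ.filter (fun h : Fin A.m => ¬ (h : ℕ) < c),
      A.lam h = k :=
    (Finset.sum_filter_add_sum_filter_not _ _ _).trans A.lam_sum
  have hD : ∑ h, 2 * A.lam h * (if (h : ℕ) < c then 0 else 1)
      = 2 * ∑ h ∈ Finset.univ.filter (fun h : Fin A.m => ¬ (h : ℕ) < c), A.lam h := by
    rw [Finset.mul_sum, Finset.sum_filter]
    exact Finset.sum_congr rfl fun h _ => by split_ifs <;> simp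
  omega

theorem weightedTotalDegree_prepot_lt (heN : ∀ h j, eN h j ≠ 0 → ∃ h' < h, j ∈ A.Jset h')
    (a : Fin n → ℂ) {I L : Finset (Fin n)} (hIk : I.card = k) (hLk : L.card = k)
    (hL : Indep b L) {c : ℕ} (hc : c ≤ A.m) (hIc : (I ∩ A.JBelow c).card < A.lamBelow c) :
    weightedTotalDegree (A.weightAbove c) (A.prepot a cC eN)
      < ∑ j ∈ I, A.weightAbove c j + ∑ j ∈ L, A.weightAbove c j := by
  have hdeg := weightedTotalDegree_weightAbove_prepot_add_le (cC := cC) heN a c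
  have hLc := A.card_inter_JBelow_le hL hc
  have hIsum := Finset.card_inter_add_sum_ite_mem I (A.JBelow c)
  have hLsum := Finset.card_inter_add_sum_ite_mem L (A.JBelow c)
  simp only [weightAbove]
  omega

end Elementary

end ArrPaper

open ArrPaper

theorem stmt12_general (n k : ℕ)
    (b : Fin n → Fin k → ℂ)
    (a : Fin n → ℂ)
    (A : Elementary n k b)
    (sB : Fin k → Fin k → ℂ) (cC : Fin n → Fin k → ℂ)
    (eN : Fin A.m → Fin n → ℂ) (hch : A.ChoiceOK sB cC eN)
    (I L : Finset (Fin n)) (hIk : I.card = k) (hLk : L.card = k)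
    (hIind : Indep b I) (hLind : Indep b L)
    (hnd : ¬ A.Distinguished I ∨ ¬ A.Distinguished L) :
    pderivList
        ((List.ofFn fun l : Fin k => (I.orderIsoOfFin hIk l).1)
          ++ (List.ofFn fun l : Fin k => (L.orderIsoOfFin hLk l).1))
        (A.prepot a cC eN)
      = 0 := by
  have heN := hch.2.2.2.1
  obtain ⟨c, hc⟩ : ∃ c, MvPolynomial.weightedTotalDegree (A.weightAbove c) (A.prepot a cC eN)
      < ∑ j ∈ I, A.weightAbove c j + ∑ j ∈ L, A.weightAbove c j := by
    rcases hnd with hI | hL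
    · obtain ⟨c, hcm, hIc⟩ := A.exists_card_inter_JBelow_lt hIind hIk hI
      exact ⟨c, Elementary.weightedTotalDegree_prepot_lt heN a hIk hLk hLind hcm hIc⟩
    · obtain ⟨c, hcm, hLc⟩ := A.exists_card_inter_JBelow_lt hLind hLk hL
      refine ⟨c, ?_⟩
      rw [add_comm]
      exact Elementary.weightedTotalDegree_prepot_lt heN a hLk hIk hIind hcm hLc
  refine pderivList_eq_zero_of_weight_lt (A.weightAbove c) _ _ fun d hd => ?_
  rw [List.map_append, List.sum_append, List.sum_map_ofFn_orderIsoOfFin,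
    List.sum_map_ofFn_orderIsoOfFin]
  exact (MvPolynomial.le_weightedTotalDegree _ hd).trans_lt hc

/-- **Lemma 6.3 of the paper.** If `I` or `L` is not a distinguished element of the
elementary subarrangement `(J_1,…,J_m)`, then the `2k`-th mixed partial derivative
`∂^{2k} P_{J_λ} / ∂z_{i_1} ⋯ ∂z_{i_k} ∂z_{l_1} ⋯ ∂z_{l_k}` of its prepotential of
first kind vanishes. -/
theorem stmt12 (n k : ℕ) (hk : 0 < k) (hkn : k < n)
    (b : Fin n → Fin k → ℂ) (hb0 : ∀ j, b j ≠ 0)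
    (hbspan : Submodule.span ℂ (Set.range b) = ⊤)
    (a : Fin n → ℂ) (ha : ∀ j, a j ≠ 0)
    (A : Elementary n k b)
    (sB : Fin k → Fin k → ℂ) (cC : Fin n → Fin k → ℂ)
    (eN : Fin A.m → Fin n → ℂ) (hch : A.ChoiceOK sB cC eN)
    (I L : Finset (Fin n)) (hIk : I.card = k) (hLk : L.card = k)
    (hIind : Indep b I) (hLind : Indep b L)
    (hnd : ¬ A.Distinguished I ∨ ¬ A.Distinguished L) :
    pderivList
        ((List.ofFn fun l : Fin k => (I.orderIsoOfFin hIk l).1)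
          ++ (List.ofFn fun l : Fin k => (L.orderIsoOfFin hLk l).1))
        (A.prepot a cC eN)
      = 0 :=
  stmt12_general n k b a A sB cC eN hch I L hIk hLk hIind hLind hnd
end
end

section
/- For every independent (k−1)-element subset {s_1,…,s_{k−1}} ⊆ J, one has Σ_{j∈J} d_{j,s_1,…,s_{k−1}} · ∂P/∂z_j = 0 identically (as polynomials in z_1,…,z_n). Moreover, for every elementary subarrangement (J_1,…,J_m) and every h = 1,…,m, Σ_{j∈J} d_{j,s_1,…,s_{k−1}} · ∂f_{J_λ,h}/∂z_j = 0. -/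
open scoped BigOperators
open Classical

noncomputable section

/-! The operator `L = ∑_j d_{j,s_1,…,s_{k−1}} ∂/∂z_j` is a derivation, and
`d_{j,s_1,…,s_{k−1}} = g(b_j)` for the linear form `g = det(·, b_{s_1}, …, b_{s_{k−1}})`.
Hence `L` sends a linear form `∑_j c_j z_j` to the constant `g(∑_j c_j b_j)`, which vanishes
for `f_{J_λ,h}` since its coefficients are those of a linear relation among the `b_j`.
A derivation kills constants and products and powers of elements it kills, so `L` kills
every prepotential and hence the potential. -/

namespace Derivation

variable {R A M : Type*} [CommSemiring R] [CommSemiring A] [Algebra R A]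
  [AddCommMonoid M] [Module A M] [Module R M] (D : Derivation R A M)

lemma map_mul_eq_zero {a b : A} (ha : D a = 0) (hb : D b = 0) : D (a * b) = 0 := by
  rw [leibniz, ha, hb, smul_zero, smul_zero, add_zero]

lemma map_prod_eq_zero {ι : Type*} (s : Finset ι) {f : ι → A} (hf : ∀ i ∈ s, D (f i) = 0) :
    D (∏ i ∈ s, f i) = 0 :=
  Finset.prod_induction f (fun a => D a = 0) (fun _ _ => D.map_mul_eq_zero) D.map_one_eq_zero hf

lemma map_pow_eq_zero {a : A} (ha : D a = 0) (e : ℕ) : D (a ^ e) = 0 := by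
  rw [leibniz_pow, ha, smul_zero, smul_zero]

end Derivation

-- No finiteness is needed: `∑ᶠ` of a family with infinite support is `0`.
lemma map_finsum_eq_zero {ι M N F : Type*} [AddCommMonoid M] [AddCommMonoid N] [FunLike F M N]
    [AddMonoidHomClass F M N] (φ : F) {f : ι → M} (hf : ∀ i, φ (f i) = 0) :
    φ (∑ᶠ i, f i) = 0 :=
  finsum_induction (fun x => φ x = 0) (map_zero φ)
    (fun x y hx hy => by rw [map_add, hx, hy, add_zero]) hf

namespace MvPolynomial

variable {R σ : Type*} [CommRing R] [Fintype σ]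

noncomputable def dirDeriv (d : σ → R) : Derivation R (MvPolynomial σ R) (MvPolynomial σ R) :=
  ∑ j, (C (d j) : MvPolynomial σ R) • pderiv j

lemma dirDeriv_apply (d : σ → R) (p : MvPolynomial σ R) :
    dirDeriv d p = ∑ j, C (d j) * pderiv j p := by
  rw [dirDeriv, ← Derivation.coeFnAddMonoidHom_apply, map_sum, Finset.sum_apply]
  rfl

lemma dirDeriv_X (d : σ → R) (i : σ) : dirDeriv d (X i) = C (d i) := by
  simp [dirDeriv_apply, pderiv_X, Pi.single_apply]

lemma dirDeriv_linearCombination {V ι : Type*} [AddCommGroup V] [Module R V]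
    (g : V →ₗ[R] R) (b : σ → V) {d : σ → R} (hd : ∀ j, d j = g (b j))
    (s : Finset ι) (c : ι → R) (t : ι → σ) :
    dirDeriv d (∑ i ∈ s, C (c i) * X (t i)) = C (g (∑ i ∈ s, c i • b (t i))) := by
  simp [← smul_eq_C_mul, dirDeriv_X, hd]

end MvPolynomial

namespace ArrPaper

open MvPolynomial

variable {n k : ℕ} {b : Fin n → Fin k → ℂ}

lemma dtup_update (T : Fin k → Fin n) (l₀ : Fin k) (j : Fin n) :
    dtup b (Function.update T l₀ j) =
      Matrix.detRowAlternating.toMultilinearMap.toLinearMap (b ∘ T) l₀ (b j) := by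
  rw [MultilinearMap.toLinearMap_apply, ← Function.comp_update, dtup, ← Matrix.det_transpose]
  rfl

lemma consTuple_eq_update (hk : 0 < k) (j j' : Fin n) (I' : Finset (Fin n))
    (hI' : I'.card = k - 1) :
    consTuple hk j I' hI' = Function.update (consTuple hk j' I' hI') ⟨0, hk⟩ j := by
  funext l
  by_cases hl : l = ⟨0, hk⟩
  · subst hl
    simp [consTuple]
  · have hl' : (l : ℕ) ≠ 0 := fun h => hl (Fin.ext h)
    rw [Function.update_of_ne hl]
    simp only [consTuple, dif_neg hl']

lemma exists_linearMap_dtup_consTuple (hk : 0 < k) (hkn : k < n) (b : Fin n → Fin k → ℂ)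
    (I' : Finset (Fin n)) (hI' : I'.card = k - 1) :
    ∃ g : (Fin k → ℂ) →ₗ[ℂ] ℂ, ∀ j, dtup b (consTuple hk j I' hI') = g (b j) :=
  ⟨_, fun j => by rw [consTuple_eq_update hk j ⟨0, hk.trans hkn⟩, dtup_update]⟩

lemma Elementary.dirDeriv_fpol_eq_zero (A : Elementary n k b) {cC : Fin n → Fin k → ℂ}
    {eN : Fin A.m → Fin n → ℂ} {h : Fin A.m} {d : Fin n → ℂ} {g : (Fin k → ℂ) →ₗ[ℂ] ℂ}
    (hd : ∀ j, d j = g (b j))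
    (hrel : (∑ i : Fin (A.lam h + 1), ((-1 : ℂ) ^ (i : ℕ) * A.DD cC h i) • b (A.elt h i))
      + ∑ j : Fin n, eN h j • b j = 0) :
    dirDeriv d (A.fpol cC eN h) = 0 := by
  rw [Elementary.fpol, map_add, dirDeriv_linearCombination g b hd,
    dirDeriv_linearCombination g b hd, ← map_add C, ← map_add g, hrel, map_zero, map_zero]

lemma Elementary.dirDeriv_prepot_eq_zero (A : Elementary n k b) {a : Fin n → ℂ}
    {cC : Fin n → Fin k → ℂ} {eN : Fin A.m → Fin n → ℂ} {d : Fin n → ℂ}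
    (hf : ∀ h, dirDeriv d (A.fpol cC eN h) = 0) :
    dirDeriv d (A.prepot a cC eN) = 0 :=
  (dirDeriv d).map_prod_eq_zero _ fun h _ =>
    (dirDeriv d).map_mul_eq_zero (derivation_C _ _) ((dirDeriv d).map_pow_eq_zero (hf h) _)

lemma dirDeriv_potential1_eq_zero {a : Fin n → ℂ} {cC : Elementary n k b → Fin n → Fin k → ℂ}
    {eN : (A : Elementary n k b) → Fin A.m → Fin n → ℂ} {d : Fin n → ℂ}
    (hf : ∀ (A : Elementary n k b) h, dirDeriv d (A.fpol (cC A) (eN A) h) = 0) :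
    dirDeriv d (Potential1 b a cC eN) = 0 :=
  map_finsum_eq_zero _ fun A =>
    (dirDeriv d).map_mul_eq_zero (derivation_C _ _) (A.dirDeriv_prepot_eq_zero (hf A))

end ArrPaper

open ArrPaper

theorem stmt15_general (n k : ℕ) (hk : 0 < k) (hkn : k < n)
    (b : Fin n → Fin k → ℂ)
    (a : Fin n → ℂ)
    -- the choices fixed once for each elementary subarrangement
    (sB : Elementary n k b → Fin k → Fin k → ℂ)
    (cC : Elementary n k b → Fin n → Fin k → ℂ)
    (eN : (A : Elementary n k b) → Fin A.m → Fin n → ℂ)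
    (hch : ∀ A : Elementary n k b, A.ChoiceOK (sB A) (cC A) (eN A))
    (I' : Finset (Fin n)) (hI' : I'.card = k - 1) :
    (∑ j : Fin n, MvPolynomial.C (dtup b (consTuple hk j I' hI')) *
        MvPolynomial.pderiv j (Potential1 b a cC eN) = 0) ∧
    (∀ (A : Elementary n k b) (h : Fin A.m),
      ∑ j : Fin n, MvPolynomial.C (dtup b (consTuple hk j I' hI')) *
        MvPolynomial.pderiv j (A.fpol (cC A) (eN A) h) = 0) := by
  obtain ⟨g, hg⟩ := exists_linearMap_dtup_consTuple hk hkn b I' hI'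
  have hf : ∀ (A : Elementary n k b) h,
      MvPolynomial.dirDeriv (fun j => dtup b (consTuple hk j I' hI'))
        (A.fpol (cC A) (eN A) h) = 0 :=
    fun A h => A.dirDeriv_fpol_eq_zero hg ((hch A).2.2.2.2 h)
  simp only [← MvPolynomial.dirDeriv_apply]
  exact ⟨dirDeriv_potential1_eq_zero hf, hf⟩

/-- **Lemma 4.5 of the paper (invariance of the potential).**
For every independent `(k−1)`-element subset `{s_1,…,s_{k−1}} ⊆ J`,
`∑_{j∈J} d_{j,s_1,…,s_{k−1}} ∂P/∂z_j = 0` for the potential of first kind `P`, and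
`∑_{j∈J} d_{j,s_1,…,s_{k−1}} ∂f_{J_λ,h}/∂z_j = 0` for every elementary
subarrangement and every `h`. -/
theorem stmt15 (n k : ℕ) (hk : 0 < k) (hkn : k < n)
    (b : Fin n → Fin k → ℂ) (hb0 : ∀ j, b j ≠ 0)
    (hbspan : Submodule.span ℂ (Set.range b) = ⊤)
    (a : Fin n → ℂ) (ha : ∀ j, a j ≠ 0)
    (h2 : H2 b a)
    -- the choices fixed once for each elementary subarrangement
    (sB : Elementary n k b → Fin k → Fin k → ℂ)
    (cC : Elementary n k b → Fin n → Fin k → ℂ)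
    (eN : (A : Elementary n k b) → Fin A.m → Fin n → ℂ)
    (hch : ∀ A : Elementary n k b, A.ChoiceOK (sB A) (cC A) (eN A))
    (I' : Finset (Fin n)) (hI' : I'.card = k - 1) (hind : Indep b I') :
    (∑ j : Fin n, MvPolynomial.C (dtup b (consTuple hk j I' hI')) *
        MvPolynomial.pderiv j (Potential1 b a cC eN) = 0) ∧
    (∀ (A : Elementary n k b) (h : Fin A.m),
      ∑ j : Fin n, MvPolynomial.C (dtup b (consTuple hk j I' hI')) *
        MvPolynomial.pderiv j (A.fpol (cC A) (eN A) h) = 0) :=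
  stmt15_general n k hk hkn b a sB cC eN hch I' hI'
end
end
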